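/- arXiv:2206.12554 — 7 statements merged into one kernel-verified Lean document; each statement's English description precedes it below -/
import Mathlib

section
/- For every x ∈ ℝⁿ and every quantile parameter q with 0 < q < 1 − β, the q-th quantile of the absolute residual satisfies Q_q(x) ≤ (σ_max / (√m · √(1 − q − β))) · ‖x − x*‖; equivalently, m(1 − q − β) · Q_q(x)² ≤ σ_max² · ‖x − x*‖². -/
open scoped InnerProductSpace

/-- The `q`-th quantile of the values `r 0, …, r (m-1)`: the `⌈q·m⌉`-th smallest element of
the multiset `{r i : i ∈ [m]}` (indices into the sorted list are 0-based, hence `⌈q·m⌉ - 1`). -/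
noncomputable def qQuantile {m : ℕ} (q : ℝ) (r : Fin m → ℝ) : ℝ :=
  (Multiset.sort (Multiset.map r Finset.univ.val) (· ≤ ·)).getD (⌈q * (m : ℝ)⌉₊ - 1) 0

/-- Let `A ∈ ℝ^{m×n}` have unit-norm rows `a i`, largest singular value
`σ_max`, let the uncorrupted system `⟨a i, x⋆⟩ = bᵗ i` be consistent, and let the observed
right-hand side be `b = bᵗ + b^c` where `b^c` has at most `β·m` nonzero entries, `β ∈ [0,1)`.
Then for every `x ∈ ℝⁿ` and every `q` with `0 < q < 1 - β`, the `q`-th quantile of the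
absolute residual satisfies
`Q_q(x) ≤ (σ_max / (√m · √(1 - q - β))) · ‖x - x⋆‖`. -/
theorem quantile_residual_bound
    (m n : ℕ) (hm : 0 < m)
    (a : Fin m → EuclideanSpace ℝ (Fin n))
    (hunit : ∀ i, ‖a i‖ = 1)
    (β : ℝ) (hβ0 : 0 ≤ β) (hβ1 : β < 1)
    (bt bc b : Fin m → ℝ) (hb : ∀ i, b i = bt i + bc i)
    (xstar : EuclideanSpace ℝ (Fin n))
    (hsol : ∀ i, ⟪a i, xstar⟫_ℝ = bt i)
    (hcorr : (((Finset.univ : Finset (Fin m)).filter fun i => bc i ≠ 0).card : ℝ) ≤ β * m)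
    (smax : ℝ) (hsmax0 : 0 ≤ smax)
    (hsmax : ∀ x : EuclideanSpace ℝ (Fin n),
      ∑ i, ⟪a i, x⟫_ℝ ^ 2 ≤ smax ^ 2 * ‖x‖ ^ 2)
    (q : ℝ) (hq0 : 0 < q) (hq1 : q < 1 - β)
    (x : EuclideanSpace ℝ (Fin n)) :
    qQuantile q (fun i => |⟪a i, x⟫_ℝ - b i|) ≤
      smax / (Real.sqrt (m : ℝ) * Real.sqrt (1 - q - β)) * ‖x - xstar‖ := by
  classical
  set r : Fin m → ℝ := fun i => |⟪a i, x⟫_ℝ - b i| with hrdef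
  set s : Multiset ℝ := Multiset.map r Finset.univ.val with hsdef
  set L : List ℝ := Multiset.sort s (· ≤ ·) with hLdef
  have hLlen : L.length = m := by simp [hLdef, hsdef]
  set k : ℕ := ⌈q * (m : ℝ)⌉₊ with hkdef
  have hqm0 : 0 < q * (m:ℝ) := by positivity
  have hk1 : 1 ≤ k := Nat.one_le_ceil_iff.mpr hqm0
  have hkm : k ≤ m := Nat.ceil_le.mpr (by nlinarith)
  have hidx : k - 1 < L.length := by omega
  set Q : ℝ := L.getD (k-1) 0 with hQdef
  have hQget : Q = L.get ⟨k-1, hidx⟩ := by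
    rw [hQdef, List.getD_eq_getElem L 0 hidx]; simp
  have hsort : L.Pairwise (· ≤ ·) := Multiset.pairwise_sort _ _
  have hQmem : Q ∈ L := by rw [hQget]; exact L.get_mem _
  have hQ0 : 0 ≤ Q := by
    have hQs : Q ∈ s := by rwa [Multiset.mem_sort] at hQmem
    obtain ⟨i, _, hi⟩ := Multiset.mem_map.mp hQs
    rw [← hi]; exact abs_nonneg _
  -- all elements of drop are ≥ Q
  have hdrop : ∀ y ∈ L.drop (k-1), Q ≤ y := by
    intro y hy
    obtain ⟨j, hj, hjy⟩ := List.mem_iff_getElem.mp hy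
    rw [← hjy, List.getElem_drop, hQget]
    have h2 : k - 1 + j < L.length := by
      have := hj; rw [List.length_drop] at this; omega
    have := hsort.rel_get_of_le (a := ⟨k-1, hidx⟩) (b := ⟨k-1+j, h2⟩) (by simp)
    simpa using this
  -- count of elements < Q is at most k-1
  have hc1 : ((Finset.univ.filter fun i => r i < Q).card) ≤ k - 1 := by
    have hfl : ((Finset.univ.filter fun i => r i < Q).card)
        = (L.filter (fun y => decide (y < Q))).length := by
      have hperm : (L : Multiset ℝ) = s := Multiset.sort_eq s _
      have h1 : Multiset.filter (fun y => y < Q) s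
          = Multiset.map r (Multiset.filter (fun i => r i < Q) Finset.univ.val) := by
        rw [hsdef, Multiset.filter_map]
        rfl
      have h2 : ((Finset.univ.filter fun i => r i < Q).card)
          = Multiset.card (Multiset.filter (fun y => y < Q) s) := by
        rw [h1, Multiset.card_map]
        rfl
      rw [h2, ← hperm]
      simp
    rw [hfl]
    have hLsplit : L.filter (fun y => decide (y < Q))
        = (L.take (k-1)).filter (fun y => decide (y < Q))
          ++ (L.drop (k-1)).filter (fun y => decide (y < Q)) := by
      rw [← List.filter_append, List.take_append_drop]
    have hdropnil : (L.drop (k-1)).filter (fun y => decide (y < Q)) = [] := by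
      rw [List.filter_eq_nil_iff]
      intro y hy
      simp only [decide_eq_true_eq, not_lt]
      exact hdrop y hy
    rw [hLsplit, List.length_append, hdropnil, List.length_nil, Nat.add_zero]
    exact (List.length_filter_le _ _).trans (by rw [List.length_take]; omega)
  set T : Finset (Fin m) := Finset.univ.filter (fun i => Q ≤ r i ∧ bc i = 0) with hT
  have hTc : (Finset.univ.filter (fun i => ¬(Q ≤ r i ∧ bc i = 0))).card
      ≤ (k-1) + (Finset.univ.filter fun i => bc i ≠ 0).card := by
    have hsub : Finset.univ.filter (fun i => ¬(Q ≤ r i ∧ bc i = 0))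
        ⊆ (Finset.univ.filter fun i => r i < Q) ∪ (Finset.univ.filter fun i => bc i ≠ 0) := by
      intro i hi
      simp only [Finset.mem_filter, Finset.mem_union, Finset.mem_univ, true_and] at *
      push_neg at hi
      by_cases h : Q ≤ r i
      · exact Or.inr (hi h)
      · exact Or.inl (not_le.mp h)
    exact (Finset.card_le_card hsub).trans
      ((Finset.card_union_le _ _).trans (Nat.add_le_add hc1 le_rfl))
  have hTm : T.card + (Finset.univ.filter (fun i => ¬(Q ≤ r i ∧ bc i = 0))).card = m := by
    rw [hT, Finset.card_filter_add_card_filter_not]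
    simp
  have hkreal : ((k:ℝ)) < q * m + 1 := Nat.ceil_lt_add_one (le_of_lt hqm0)
  have hk1real : ((k-1:ℕ):ℝ) = (k:ℝ) - 1 := by
    rw [Nat.cast_sub hk1]; simp
  have hcardT : (m:ℝ) * (1 - q - β) ≤ T.card := by
    have e1 : ((T.card:ℝ)) + ((Finset.univ.filter (fun i => ¬(Q ≤ r i ∧ bc i = 0))).card : ℝ)
        = m := by exact_mod_cast congrArg (Nat.cast : ℕ → ℝ) hTm
    have e2 : ((Finset.univ.filter (fun i => ¬(Q ≤ r i ∧ bc i = 0))).card : ℝ)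
        ≤ ((k-1:ℕ):ℝ) + ((Finset.univ.filter fun i => bc i ≠ 0).card : ℝ) := by
      exact_mod_cast hTc
    rw [hk1real] at e2
    nlinarith [hcorr]
  -- the sum bound
  have hsum : (T.card : ℝ) * Q^2 ≤ smax^2 * ‖x - xstar‖^2 := by
    calc (T.card:ℝ) * Q^2 = ∑ _i ∈ T, Q^2 := by rw [Finset.sum_const, nsmul_eq_mul]
      _ ≤ ∑ i ∈ T, ⟪a i, x - xstar⟫_ℝ^2 := by
          apply Finset.sum_le_sum
          intro i hi
          rw [hT, Finset.mem_filter] at hi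
          obtain ⟨_, hQr, hbc⟩ := hi
          have hri : r i = |⟪a i, x - xstar⟫_ℝ| := by
            rw [hrdef]
            simp only [inner_sub_right, hsol i, hb i, hbc, add_zero]
          calc Q^2 ≤ (r i)^2 := by
                have := pow_le_pow_left₀ hQ0 hQr 2
                exact this
            _ = ⟪a i, x - xstar⟫_ℝ^2 := by rw [hri, sq_abs]
      _ ≤ ∑ i, ⟪a i, x - xstar⟫_ℝ^2 :=
          Finset.sum_le_sum_of_subset_of_nonneg (Finset.subset_univ T)
            (fun i _ _ => sq_nonneg _)
      _ ≤ smax^2 * ‖x - xstar‖^2 := hsmax _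
  have hpos : (0:ℝ) < (m:ℝ) * (1 - q - β) := by
    have : (0:ℝ) < 1 - q - β := by linarith
    positivity
  have key : (m:ℝ) * (1 - q - β) * Q^2 ≤ smax^2 * ‖x - xstar‖^2 :=
    le_trans (mul_le_mul_of_nonneg_right hcardT (sq_nonneg Q)) hsum
  -- finish
  set R : ℝ := smax / (Real.sqrt (m : ℝ) * Real.sqrt (1 - q - β)) * ‖x - xstar‖ with hR
  have hR0 : 0 ≤ R := by
    rw [hR]; positivity
  have hRsq : R^2 = smax^2 * ‖x - xstar‖^2 / ((m:ℝ) * (1 - q - β)) := by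
    rw [hR, mul_pow, div_pow, mul_pow, Real.sq_sqrt (by positivity : (0:ℝ) ≤ (m:ℝ)),
      Real.sq_sqrt (by linarith : (0:ℝ) ≤ 1 - q - β)]
    ring
  have hQ2 : Q^2 ≤ R^2 := by
    rw [hRsq, le_div_iff₀ hpos]
    nlinarith [key]
  have final : Q ≤ R := by
    calc Q = Real.sqrt (Q^2) := by rw [Real.sqrt_sq hQ0]
      _ ≤ Real.sqrt (R^2) := Real.sqrt_le_sqrt hQ2
      _ = R := Real.sqrt_sq hR0
  show qQuantile q r ≤ R
  simp only [qQuantile]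
  rw [← hsdef, ← hLdef, ← hkdef, ← hQdef]
  exact final
end

section
/- Let A ∈ ℝ^{m×n} have rows a_1,…,a_m, let σ_max be its largest singular value, let τ ⊆ {1,…,m}, let t > 0 and α ≥ 0 satisfy α·(σ_max² + σ_min²(A_τ)) ≤ 2t. Then for every e ∈ ℝⁿ, ‖(I − (α/t)·A_τᵀ A_τ) e‖ ≤ (1 − (α/t)·σ_min²(A_τ)) · ‖e‖, where I is the n×n identity matrix. -/
open scoped InnerProductSpace

private lemma semi_cs {E : Type*} [NormedAddCommGroup E] [InnerProductSpace ℝ E]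
    (P : E →ₗ[ℝ] E) (sym : ∀ x y : E, ⟪P x, y⟫_ℝ = ⟪x, P y⟫_ℝ)
    (pos : ∀ x : E, 0 ≤ ⟪P x, x⟫_ℝ) (x y : E) :
    ⟪P x, y⟫_ℝ ^ 2 ≤ ⟪P x, x⟫_ℝ * ⟪P y, y⟫_ℝ := by
  have key : ∀ θ : ℝ, 0 ≤ ⟪P y, y⟫_ℝ * (θ * θ) + (2 * ⟪P x, y⟫_ℝ) * θ + ⟪P x, x⟫_ℝ := by
    intro θ
    have h := pos (x + θ • y)
    have hyx : ⟪P y, x⟫_ℝ = ⟪P x, y⟫_ℝ := by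
      rw [sym y x, real_inner_comm]
    have expand : ⟪P (x + θ • y), x + θ • y⟫_ℝ
        = ⟪P y, y⟫_ℝ * (θ * θ) + (2 * ⟪P x, y⟫_ℝ) * θ + ⟪P x, x⟫_ℝ := by
      rw [map_add, map_smul]
      simp only [inner_add_left, inner_add_right, real_inner_smul_left, real_inner_smul_right,
        smul_eq_mul]
      rw [hyx]; ring
    linarith [expand ▸ h]
  have hd := discrim_le_zero key
  rw [discrim] at hd
  nlinarith [hd]

set_option maxHeartbeats 2000000 in
/-- Let `A ∈ ℝ^{m×n}` have rows `a i`, largest singular value `σ_max`, and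
let `τ ⊆ [m]` with `σ_min(A_τ)` the smallest singular value of the row submatrix `A_τ`
(so that `A_τᵀ A_τ e = ∑_{i ∈ τ} ⟨a i, e⟩ • a i`). If `t > 0` and `α ≥ 0` satisfy
`α·(σ_max² + σ_min²(A_τ)) ≤ 2t`, then for every `e ∈ ℝⁿ`,
`‖(I - (α/t)·A_τᵀ A_τ) e‖ ≤ (1 - (α/t)·σ_min²(A_τ)) · ‖e‖`. -/
theorem contraction_norm_bound
    (m n : ℕ) (a : Fin m → EuclideanSpace ℝ (Fin n))
    (smax : ℝ) (hsmax0 : 0 ≤ smax)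
    (hsmax : ∀ x : EuclideanSpace ℝ (Fin n),
      ∑ i, ⟪a i, x⟫_ℝ ^ 2 ≤ smax ^ 2 * ‖x‖ ^ 2)
    (τ : Finset (Fin m))
    (smin : ℝ) (hsmin0 : 0 ≤ smin)
    (hsmin : ∀ x : EuclideanSpace ℝ (Fin n),
      smin ^ 2 * ‖x‖ ^ 2 ≤ ∑ i ∈ τ, ⟪a i, x⟫_ℝ ^ 2)
    (t α : ℝ) (ht : 0 < t) (hα : 0 ≤ α)
    (hcond : α * (smax ^ 2 + smin ^ 2) ≤ 2 * t)
    (e : EuclideanSpace ℝ (Fin n)) :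
    ‖e - (α / t) • ∑ i ∈ τ, ⟪a i, e⟫_ℝ • a i‖ ≤ (1 - (α / t) * smin ^ 2) * ‖e‖ := by
  classical
  by_cases he : e = 0
  · simp [he]
  set c : ℝ := α / t with hc
  have hc0 : 0 ≤ c := div_nonneg hα ht.le
  have hcc : c * (smax ^ 2 + smin ^ 2) ≤ 2 := by
    rw [hc, div_mul_eq_mul_div, div_le_iff₀ ht]
    linarith
  have hene : (0:ℝ) < ‖e‖ ^ 2 := by
    have : 0 < ‖e‖ := norm_pos_iff.mpr he
    positivity
  -- extend the sum over τ to the full sum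
  have hτmax : ∀ x : EuclideanSpace ℝ (Fin n),
      ∑ i ∈ τ, ⟪a i, x⟫_ℝ ^ 2 ≤ smax ^ 2 * ‖x‖ ^ 2 := by
    intro x
    refine le_trans ?_ (hsmax x)
    exact Finset.sum_le_sum_of_subset_of_nonneg (Finset.subset_univ τ)
      (fun i _ _ => sq_nonneg _)
  have hms : smin ^ 2 ≤ smax ^ 2 := by
    have h1 := hsmin e
    have h2 := hτmax e
    nlinarith
  have hlam0 : 0 ≤ 1 - c * smin ^ 2 := by nlinarith
  set K : ℝ := c * (smax ^ 2 - smin ^ 2) with hK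
  have hK0 : 0 ≤ K := by
    apply mul_nonneg hc0; linarith
  have hK2lam : K ≤ 2 * (1 - c * smin ^ 2) := by
    rw [hK]; nlinarith
  -- the positive semidefinite operator P
  set P : EuclideanSpace ℝ (Fin n) →ₗ[ℝ] EuclideanSpace ℝ (Fin n) :=
    { toFun := fun x => c • ((∑ i ∈ τ, ⟪a i, x⟫_ℝ • a i) - smin ^ 2 • x)
      map_add' := by
        intro x y
        simp only [inner_add_right, add_smul, Finset.sum_add_distrib, smul_add]
        module
      map_smul' := by
        intro r x
        simp only [real_inner_smul_right, RingHom.id_apply, ← smul_smul, ← Finset.smul_sum]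
        module } with hP
  -- quadratic form of P
  have hquad : ∀ x : EuclideanSpace ℝ (Fin n),
      ⟪P x, x⟫_ℝ = c * ((∑ i ∈ τ, ⟪a i, x⟫_ℝ ^ 2) - smin ^ 2 * ‖x‖ ^ 2) := by
    intro x
    rw [hP]
    simp only [LinearMap.coe_mk, AddHom.coe_mk, real_inner_smul_left, inner_sub_left,
      sum_inner, real_inner_self_eq_norm_sq]
    congr 2
    exact Finset.sum_congr rfl fun i _ => (pow_two _).symm
  have pos : ∀ x : EuclideanSpace ℝ (Fin n), 0 ≤ ⟪P x, x⟫_ℝ := by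
    intro x
    rw [hquad]
    have := hsmin x
    apply mul_nonneg hc0
    linarith
  have bdd : ∀ x : EuclideanSpace ℝ (Fin n), ⟪P x, x⟫_ℝ ≤ K * ‖x‖ ^ 2 := by
    intro x
    rw [hquad, hK]
    have := hτmax x
    nlinarith
  have sym : ∀ x y : EuclideanSpace ℝ (Fin n), ⟪P x, y⟫_ℝ = ⟪x, P y⟫_ℝ := by
    intro x y
    rw [hP]
    simp only [LinearMap.coe_mk, AddHom.coe_mk, real_inner_smul_left, real_inner_smul_right,
      inner_sub_left, inner_sub_right, sum_inner, inner_sum]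
    have hs : (∑ i ∈ τ, ⟪a i, y⟫_ℝ * ⟪x, a i⟫_ℝ) = ∑ i ∈ τ, ⟪a i, x⟫_ℝ * ⟪a i, y⟫_ℝ :=
      Finset.sum_congr rfl fun i _ => by rw [real_inner_comm x (a i)]; ring
    rw [hs]
  -- key bound: ‖P e‖² ≤ K * ⟪P e, e⟫
  have hPe : ‖P e‖ ^ 2 ≤ K * ⟪P e, e⟫_ℝ := by
    by_cases hz : P e = 0
    · simp [hz]
    · have hcs := semi_cs P sym pos e (P e)
      have h1 : ⟪P e, P e⟫_ℝ = ‖P e‖ ^ 2 := real_inner_self_eq_norm_sq _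
      have h2 : ⟪P (P e), P e⟫_ℝ ≤ K * ‖P e‖ ^ 2 := bdd (P e)
      have hPen : (0:ℝ) < ‖P e‖ ^ 2 := by
        have : 0 < ‖P e‖ := norm_pos_iff.mpr hz
        positivity
      have hpos := pos e
      nlinarith [hcs, h1, h2]
  -- rewrite T e = λ • e - P e
  have hTe : e - c • ∑ i ∈ τ, ⟪a i, e⟫_ℝ • a i = (1 - c * smin ^ 2) • e - P e := by
    rw [hP]
    simp only [LinearMap.coe_mk, AddHom.coe_mk, sub_smul, one_smul, smul_sub, smul_smul]
    module
  rw [hTe]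
  have hexp : ‖(1 - c * smin ^ 2) • e - P e‖ ^ 2
      = (1 - c * smin ^ 2) ^ 2 * ‖e‖ ^ 2 - 2 * ((1 - c * smin ^ 2) * ⟪e, P e⟫_ℝ) + ‖P e‖ ^ 2 := by
    rw [norm_sub_sq_real, norm_smul, real_inner_smul_left, Real.norm_eq_abs,
      abs_of_nonneg hlam0]
    ring
  have hipe : ⟪e, P e⟫_ℝ = ⟪P e, e⟫_ℝ := real_inner_comm _ _
  have hsq : ‖(1 - c * smin ^ 2) • e - P e‖ ^ 2 ≤ ((1 - c * smin ^ 2) * ‖e‖) ^ 2 := by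
    rw [hexp, hipe]
    have hp := pos e
    nlinarith [hPe, hK2lam, hp]
  have hrhs : 0 ≤ (1 - c * smin ^ 2) * ‖e‖ := mul_nonneg hlam0 (norm_nonneg _)
  nlinarith [hsq, hrhs, norm_nonneg ((1 - c * smin ^ 2) • e - P e)]
end

section
/- Let A ∈ ℝ^{m×n} have rows a_1,…,a_m, let σ_max be its largest singular value, let τ ⊆ {1,…,m}, and let t > 0 and α ≥ 0 satisfy 2α/t − α²σ_max²/t² ≥ 0. Then for every e ∈ ℝⁿ, ‖(I − (α/t)·A_τᵀ A_τ) e‖² ≤ (1 − (2α/t − α²σ_max²/t²)·σ_min²(A_τ)) · ‖e‖², where I is the n×n identity matrix. -/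
open scoped InnerProductSpace

/-- Let `A ∈ ℝ^{m×n}` have rows `a i`, largest singular value `σ_max`, and
let `τ ⊆ [m]` with `σ_min(A_τ)` the smallest singular value of the row submatrix `A_τ`
(so that `A_τᵀ A_τ e = ∑_{i ∈ τ} ⟨a i, e⟩ • a i`). If `t > 0` and `α ≥ 0` satisfy
`2α/t - α²σ_max²/t² ≥ 0`, then for every `e ∈ ℝⁿ`,
`‖(I - (α/t)·A_τᵀ A_τ) e‖² ≤ (1 - (2α/t - α²σ_max²/t²)·σ_min²(A_τ)) · ‖e‖²`. -/
theorem contraction_norm_sq_bound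
    (m n : ℕ) (a : Fin m → EuclideanSpace ℝ (Fin n))
    (smax : ℝ) (hsmax0 : 0 ≤ smax)
    (hsmax : ∀ x : EuclideanSpace ℝ (Fin n),
      ∑ i, ⟪a i, x⟫_ℝ ^ 2 ≤ smax ^ 2 * ‖x‖ ^ 2)
    (τ : Finset (Fin m))
    (smin : ℝ) (hsmin0 : 0 ≤ smin)
    (hsmin : ∀ x : EuclideanSpace ℝ (Fin n),
      smin ^ 2 * ‖x‖ ^ 2 ≤ ∑ i ∈ τ, ⟪a i, x⟫_ℝ ^ 2)
    (t α : ℝ) (ht : 0 < t) (hα : 0 ≤ α)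
    (hcond : 0 ≤ 2 * α / t - α ^ 2 * smax ^ 2 / t ^ 2)
    (e : EuclideanSpace ℝ (Fin n)) :
    ‖e - (α / t) • ∑ i ∈ τ, ⟪a i, e⟫_ℝ • a i‖ ^ 2 ≤
      (1 - (2 * α / t - α ^ 2 * smax ^ 2 / t ^ 2) * smin ^ 2) * ‖e‖ ^ 2 := by
  set c := α / t with hc
  set b : EuclideanSpace ℝ (Fin n) := ∑ i ∈ τ, ⟪a i, e⟫_ℝ • a i with hbdef
  set S : ℝ := ∑ i ∈ τ, ⟪a i, e⟫_ℝ ^ 2 with hSdef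
  have hS0 : 0 ≤ S := Finset.sum_nonneg fun i _ => sq_nonneg _
  have hinner : ⟪e, b⟫_ℝ = S := by
    rw [hbdef, inner_sum]
    simp only [real_inner_smul_right]
    rw [hSdef]
    refine Finset.sum_congr rfl fun i _ => ?_
    rw [real_inner_comm]; ring
  have hib : ⟪b, b⟫_ℝ = ∑ i ∈ τ, ⟪a i, e⟫_ℝ * ⟪a i, b⟫_ℝ := by
    rw [hbdef, sum_inner]
    refine Finset.sum_congr rfl fun i _ => ?_
    rw [real_inner_smul_left]
  -- Cauchy-Schwarz on the finite sum
  have hcs : (∑ i ∈ τ, ⟪a i, e⟫_ℝ * ⟪a i, b⟫_ℝ) ^ 2 ≤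
      S * ∑ i ∈ τ, ⟪a i, b⟫_ℝ ^ 2 := by
    rw [hSdef]
    exact Finset.sum_mul_sq_le_sq_mul_sq τ _ _
  have hext : ∑ i ∈ τ, ⟪a i, b⟫_ℝ ^ 2 ≤ ∑ i, ⟪a i, b⟫_ℝ ^ 2 :=
    Finset.sum_le_univ_sum_of_nonneg fun i => sq_nonneg _
  have hb4 : (‖b‖ ^ 2) ^ 2 ≤ S * (smax ^ 2 * ‖b‖ ^ 2) := by
    have h1 : ‖b‖ ^ 2 = ⟪b, b⟫_ℝ := (real_inner_self_eq_norm_sq b).symm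
    calc (‖b‖ ^ 2) ^ 2 = (∑ i ∈ τ, ⟪a i, e⟫_ℝ * ⟪a i, b⟫_ℝ) ^ 2 := by rw [h1, hib]
      _ ≤ S * ∑ i ∈ τ, ⟪a i, b⟫_ℝ ^ 2 := hcs
      _ ≤ S * ∑ i, ⟪a i, b⟫_ℝ ^ 2 := by nlinarith [Finset.sum_nonneg (fun i (_ : i ∈ τ) => sq_nonneg ⟪a i, b⟫_ℝ)]
      _ ≤ S * (smax ^ 2 * ‖b‖ ^ 2) := by nlinarith [hsmax b]
  have hbsq : ‖b‖ ^ 2 ≤ smax ^ 2 * S := by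
    rcases eq_or_lt_of_le (sq_nonneg ‖b‖) with h | h
    · nlinarith
    · nlinarith
  have hexp : ‖e - c • b‖ ^ 2 = ‖e‖ ^ 2 - 2 * c * S + c ^ 2 * ‖b‖ ^ 2 := by
    rw [norm_sub_sq_real, real_inner_smul_right, hinner, norm_smul]
    simp only [Real.norm_eq_abs, sq_abs, mul_pow]
    ring
  have hKc : 2 * α / t - α ^ 2 * smax ^ 2 / t ^ 2 = 2 * c - c ^ 2 * smax ^ 2 := by
    rw [hc]; field_simp
  rw [hexp, hKc]
  have hK : 0 ≤ 2 * c - c ^ 2 * smax ^ 2 := by rw [← hKc]; exact hcond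
  have h1 : c ^ 2 * ‖b‖ ^ 2 ≤ c ^ 2 * (smax ^ 2 * S) :=
    mul_le_mul_of_nonneg_left hbsq (sq_nonneg c)
  have h2 : (2 * c - c ^ 2 * smax ^ 2) * (smin ^ 2 * ‖e‖ ^ 2) ≤
      (2 * c - c ^ 2 * smax ^ 2) * S := mul_le_mul_of_nonneg_left (hsmin e) hK
  nlinarith [h1, h2]
end

section
/- Fix q with β < q < 1 − β. Let x ∈ ℝⁿ and let τ ⊆ {1,…,m} satisfy: |τ| = qm, and |⟨a_i, x⟩ − b_i| ≤ Q_q(x) for every i ∈ τ. For a step size α with 0 < α and α·σ_max² ≤ qm, define the averaged-block update x' = x − (α/|τ|)·∑_{i ∈ τ} (⟨a_i, x⟩ − b_i)·a_i. Then ‖x' − x*‖² ≤ (1 − c₁α + c₂α²)·‖x − x*‖², where c₁ = 2σ²_{q−β,min}/(qm) − 2√β·σ_max²/(qm·√(1−q−β)) and c₂ = σ_max²·σ²_{q−β,min}/(q²m²) − 2√β·σ_max²·σ²_{q−β,min}/(q²m²·√(1−q−β)) + β·σ_max⁴/(q²m²·(1−q−β)). -/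
set_option maxHeartbeats 1000000


open scoped InnerProductSpace

lemma aux_norm_comb {m n : ℕ} (a : Fin m → EuclideanSpace ℝ (Fin n)) (smax : ℝ)
    (hsmax : ∀ x : EuclideanSpace ℝ (Fin n), ∑ i, ⟪a i, x⟫_ℝ ^ 2 ≤ smax ^ 2 * ‖x‖ ^ 2)
    (s : Finset (Fin m)) (c : Fin m → ℝ) :
    ‖∑ i ∈ s, c i • a i‖ ^ 2 ≤ smax ^ 2 * ∑ i ∈ s, c i ^ 2 := by
  set w := ∑ i ∈ s, c i • a i with hw
  have h1 : ‖w‖ ^ 2 = ∑ i ∈ s, c i * ⟪a i, w⟫_ℝ := by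
    rw [← real_inner_self_eq_norm_sq, hw, sum_inner]
    exact Finset.sum_congr rfl fun i _ => real_inner_smul_left _ _ _
  have h2 : (∑ i ∈ s, c i * ⟪a i, w⟫_ℝ) ^ 2 ≤ (∑ i ∈ s, c i ^ 2) * ∑ i ∈ s, ⟪a i, w⟫_ℝ ^ 2 :=
    Finset.sum_mul_sq_le_sq_mul_sq s _ _
  have h3 : ∑ i ∈ s, ⟪a i, w⟫_ℝ ^ 2 ≤ smax ^ 2 * ‖w‖ ^ 2 :=
    le_trans (Finset.sum_le_sum_of_subset_of_nonneg (Finset.subset_univ s)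
      fun i _ _ => sq_nonneg _) (hsmax w)
  have hc2 : (0:ℝ) ≤ ∑ i ∈ s, c i ^ 2 := Finset.sum_nonneg fun i _ => sq_nonneg _
  rcases eq_or_ne (‖w‖) 0 with h0 | h0
  · have : (0:ℝ) ≤ smax ^ 2 * ∑ i ∈ s, c i ^ 2 := mul_nonneg (sq_nonneg _) hc2
    simpa [h0] using this
  · have hwpos : (0:ℝ) < ‖w‖ ^ 2 := by
      have := norm_nonneg w
      have : 0 < ‖w‖ := lt_of_le_of_ne this (Ne.symm h0)
      positivity
    have : ‖w‖ ^ 2 * ‖w‖ ^ 2 ≤ (smax ^ 2 * ∑ i ∈ s, c i ^ 2) * ‖w‖ ^ 2 := by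
      nlinarith [h1, h2, h3]
    exact le_of_mul_le_mul_right this hwpos

lemma aux_spectral {m n : ℕ} (a : Fin m → EuclideanSpace ℝ (Fin n)) (t c : ℝ)
    (τg : Finset (Fin m))
    (hc : ∀ y : EuclideanSpace ℝ (Fin n),
      |‖y‖ ^ 2 - t * ∑ i ∈ τg, ⟪a i, y⟫_ℝ ^ 2| ≤ c * ‖y‖ ^ 2)
    (e : EuclideanSpace ℝ (Fin n)) :
    ‖e - t • ∑ i ∈ τg, ⟪a i, e⟫_ℝ • a i‖ ≤ c * ‖e‖ := by
  set B : EuclideanSpace ℝ (Fin n) → EuclideanSpace ℝ (Fin n) → ℝ :=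
    fun y z => ⟪y, z⟫_ℝ - t * ∑ i ∈ τg, ⟪a i, y⟫_ℝ * ⟪a i, z⟫_ℝ with hB
  have hrep : ∀ y z : EuclideanSpace ℝ (Fin n),
      ⟪y - t • ∑ i ∈ τg, ⟪a i, y⟫_ℝ • a i, z⟫_ℝ = B y z := by
    intro y z
    rw [inner_sub_left, real_inner_smul_left, sum_inner, hB]
    simp only [real_inner_smul_left]
  have hBq : ∀ y, |B y y| ≤ c * ‖y‖ ^ 2 := by
    intro y
    have h4 : ∑ i ∈ τg, ⟪a i, y⟫_ℝ * ⟪a i, y⟫_ℝ = ∑ i ∈ τg, ⟪a i, y⟫_ℝ ^ 2 :=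
      Finset.sum_congr rfl fun i _ => (sq _).symm
    have : B y y = ‖y‖ ^ 2 - t * ∑ i ∈ τg, ⟪a i, y⟫_ℝ ^ 2 := by
      rw [hB]
      show ⟪y, y⟫_ℝ - t * ∑ i ∈ τg, ⟪a i, y⟫_ℝ * ⟪a i, y⟫_ℝ = _
      rw [real_inner_self_eq_norm_sq, h4]
    rw [this]; exact hc y
  have hexp : ∀ (s : ℝ) (y z : EuclideanSpace ℝ (Fin n)),
      B (y + s • z) (y + s • z) = B y y + 2 * s * B y z + s ^ 2 * B z z := by
    intro s y z
    have hS : ∑ i ∈ τg, ⟪a i, y + s • z⟫_ℝ * ⟪a i, y + s • z⟫_ℝ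
        = ∑ i ∈ τg, ⟪a i, y⟫_ℝ * ⟪a i, y⟫_ℝ
          + (2*s) * ∑ i ∈ τg, ⟪a i, y⟫_ℝ * ⟪a i, z⟫_ℝ
          + s^2 * ∑ i ∈ τg, ⟪a i, z⟫_ℝ * ⟪a i, z⟫_ℝ := by
      rw [Finset.mul_sum, Finset.mul_sum, ← Finset.sum_add_distrib, ← Finset.sum_add_distrib]
      refine Finset.sum_congr rfl fun i _ => ?_
      rw [inner_add_right, real_inner_smul_right]
      ring
    rw [hB]
    show ⟪y + s • z, y + s • z⟫_ℝ - t * ∑ i ∈ τg, ⟪a i, y + s • z⟫_ℝ * ⟪a i, y + s • z⟫_ℝ = _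
    rw [hS, real_inner_add_add_self, real_inner_smul_left, real_inner_smul_right,
      real_inner_smul_right]
    ring
  set v := ∑ i ∈ τg, ⟪a i, e⟫_ℝ • a i with hv
  set u := e - t • v with hu
  rcases eq_or_ne e 0 with he | he
  · have : u = 0 := by simp [hu, hv, he, inner_zero_right]
    rw [he, this]; simp
  · have hepos : (0:ℝ) < ‖e‖ := norm_pos_iff.2 he
    have hc0 : 0 ≤ c := by
      have pos : 0 < ‖e‖ ^ 2 := by positivity
      by_contra h
      push_neg at h
      have : c * ‖e‖ ^ 2 < 0 := mul_neg_of_neg_of_pos h pos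
      linarith [abs_nonneg (B e e), hBq e]
    rcases eq_or_ne u 0 with hu0 | hu0
    · rw [hu0]; simp; positivity
    · have hupos : (0:ℝ) < ‖u‖ := norm_pos_iff.2 hu0
      have huB : ‖u‖ ^ 2 = B e u := by
        rw [← real_inner_self_eq_norm_sq, hu, hv, ← hrep e u]
      set s : ℝ := ‖e‖ / ‖u‖ with hs
      have hspos : 0 < s := div_pos hepos hupos
      have key : 4 * s * B e u ≤ 2 * c * (‖e‖ ^ 2 + s ^ 2 * ‖u‖ ^ 2) := by
        have h1 := hexp s e u
        have h2 := hexp (-s) e u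
        have hplus := (abs_le.1 (hBq (e + s • u))).2
        have hminus := (abs_le.1 (hBq (e + (-s) • u))).1
        have hn1 : ‖e + s • u‖ ^ 2 = ‖e‖^2 + 2 * (s * ⟪e,u⟫_ℝ) + s^2 * ‖u‖^2 := by
          rw [norm_add_sq_real, real_inner_smul_right, norm_smul, Real.norm_eq_abs,
            abs_of_pos hspos]
          ring
        have hn2 : ‖e + (-s) • u‖ ^ 2 = ‖e‖^2 - 2 * (s * ⟪e,u⟫_ℝ) + s^2 * ‖u‖^2 := by
          rw [norm_add_sq_real, real_inner_smul_right, norm_smul, Real.norm_eq_abs,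
            abs_neg, abs_of_pos hspos]
          ring
        nlinarith [h1, h2, hplus, hminus, hn1, hn2]
      have hs2 : s ^ 2 * ‖u‖ ^ 2 = ‖e‖ ^ 2 := by
        rw [hs]; field_simp
      have hsB : s * B e u = ‖e‖ * ‖u‖ := by
        rw [← huB, hs]; field_simp
      have h' : ‖e‖ * ‖u‖ ≤ ‖e‖ * (c * ‖e‖) := by nlinarith [key, hs2, hsB]
      exact le_of_mul_le_mul_left h' hepos

/-- one step of QuantileABK, the key estimate of Theorem 1.6.
Let `A ∈ ℝ^{m×n}` be of full rank with unit-norm rows `a i` and largest singular value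
`σ_max = smax`; the uncorrupted system `⟨a i, x⋆⟩ = bᵗ i` is consistent, the observed
right-hand side is `b = bᵗ + b^c` with at most `β·m` corrupted (nonzero) entries, and
`β < q < 1 - β` (with `q·m`, `β·m`, `(q-β)·m` integers).  `sminq² = σ²_{q-β,min}` is a
uniform lower bound for `σ_min²(A_τ)` over all row subsets of size `(q-β)·m`.
If `τ` is a set of `q·m` rows all of whose absolute residuals at `x` lie below the
`q`-th residual quantile, and `0 < α` with `α·σ_max² ≤ q·m`, then the averaged-block
update `x' = x - (α/|τ|)·∑_{i ∈ τ} (⟨a i, x⟩ - b i)·a i` satisfies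
`‖x' - x⋆‖² ≤ (1 - c₁·α + c₂·α²)·‖x - x⋆‖²`. -/
theorem quantileABK_one_step_bound
    (m n : ℕ) (hm : 0 < m) (hn : 0 < n)
    (a : Fin m → EuclideanSpace ℝ (Fin n))
    (hunit : ∀ i, ‖a i‖ = 1)
    (hrank : Submodule.span ℝ (Set.range a) = ⊤)
    (β q : ℝ) (hβ0 : 0 ≤ β) (hβq : β < q) (hq : q < 1 - β)
    (hβint : ∃ k : ℕ, (k : ℝ) = β * m)
    (hqint : ∃ k : ℕ, (k : ℝ) = q * m)
    (hqβint : ∃ k : ℕ, (k : ℝ) = (q - β) * m)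
    (bt bc b : Fin m → ℝ) (hb : ∀ i, b i = bt i + bc i)
    (xstar : EuclideanSpace ℝ (Fin n))
    (hsol : ∀ i, ⟪a i, xstar⟫_ℝ = bt i)
    (hcorr : (((Finset.univ : Finset (Fin m)).filter fun i => bc i ≠ 0).card : ℝ) ≤ β * m)
    (smax : ℝ) (hsmax0 : 0 ≤ smax)
    (hsmax : ∀ x : EuclideanSpace ℝ (Fin n),
      ∑ i, ⟪a i, x⟫_ℝ ^ 2 ≤ smax ^ 2 * ‖x‖ ^ 2)
    (sminq : ℝ) (hsminq0 : 0 ≤ sminq)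
    (hsminq : ∀ τ : Finset (Fin m), (τ.card : ℝ) = (q - β) * m →
      ∀ x : EuclideanSpace ℝ (Fin n), sminq ^ 2 * ‖x‖ ^ 2 ≤ ∑ i ∈ τ, ⟪a i, x⟫_ℝ ^ 2)
    (x : EuclideanSpace ℝ (Fin n))
    (τ : Finset (Fin m)) (hτcard : (τ.card : ℝ) = q * m)
    (hτres : ∀ i ∈ τ, |⟪a i, x⟫_ℝ - b i| ≤ qQuantile q (fun j => |⟪a j, x⟫_ℝ - b j|))
    (α : ℝ) (hα : 0 < α) (hαcond : α * smax ^ 2 ≤ q * m) :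
    ‖(x - (α / (τ.card : ℝ)) • ∑ i ∈ τ, (⟪a i, x⟫_ℝ - b i) • a i) - xstar‖ ^ 2 ≤
      (1 - (2 * sminq ^ 2 / (q * m) -
              2 * Real.sqrt β * smax ^ 2 / (q * m * Real.sqrt (1 - q - β))) * α +
           (smax ^ 2 * sminq ^ 2 / (q ^ 2 * m ^ 2) -
              2 * Real.sqrt β * smax ^ 2 * sminq ^ 2 /
                (q ^ 2 * m ^ 2 * Real.sqrt (1 - q - β)) +
              β * smax ^ 4 / (q ^ 2 * m ^ 2 * (1 - q - β))) * α ^ 2) *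
        ‖x - xstar‖ ^ 2 := by
  classical
  obtain ⟨kq, hkq⟩ := hqint
  obtain ⟨kqβ, hkqβ⟩ := hqβint
  set e := x - xstar with he
  have hre : ∀ i, ⟪a i, x⟫_ℝ - b i = ⟪a i, e⟫_ℝ - bc i := by
    intro i
    rw [he, inner_sub_right, hsol i, hb i]; ring
  have hmpos : (0:ℝ) < m := Nat.cast_pos.2 hm
  have hq0 : 0 < q := lt_of_le_of_lt hβ0 hβq
  have hqm : (0:ℝ) < q * m := mul_pos hq0 hmpos
  have h1qβ : 0 < 1 - q - β := by linarith
  set s1 := Real.sqrt β with hs1def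
  set s2 := Real.sqrt (1 - q - β) with hs2def
  have hs1sq : s1 ^ 2 = β := Real.sq_sqrt hβ0
  have hs2sq : s2 ^ 2 = 1 - q - β := Real.sq_sqrt h1qβ.le
  have hs2pos : 0 < s2 := Real.sqrt_pos.2 h1qβ
  have hs10 : 0 ≤ s1 := Real.sqrt_nonneg _
  set t := α / (q * m) with htdef
  have htpos : 0 < t := div_pos hα hqm
  have htsmax : t * smax ^ 2 ≤ 1 := by
    rw [htdef, div_mul_eq_mul_div, div_le_one hqm]; linarith [hαcond]
  -- partition of τ
  set τc := τ.filter (fun i => bc i ≠ 0) with hτc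
  set τg := τ.filter (fun i => ¬ bc i ≠ 0) with hτg
  have hτgbc : ∀ i ∈ τg, bc i = 0 := fun i hi => not_not.1 (Finset.mem_filter.1 hi).2
  have hcards : τc.card + τg.card = τ.card := by
    rw [hτc, hτg]; exact Finset.card_filter_add_card_filter_not _
  have hτccor : (τc.card : ℝ) ≤ β * m := by
    refine le_trans ?_ hcorr
    exact_mod_cast Nat.cast_le.2 (Finset.card_le_card
      (Finset.filter_subset_filter _ (Finset.subset_univ τ)))
  have hkqβle : kqβ ≤ τg.card := by
    have h1 : (τg.card:ℝ) = q*m - τc.card := by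
      rw [← hτcard, ← hcards]; push_cast; ring
    have : (kqβ:ℝ) ≤ τg.card := by rw [h1, hkqβ]; linarith
    exact_mod_cast this
  obtain ⟨σ, hσsub, hσcard⟩ := Finset.exists_subset_card_eq hkqβle
  have hD : ∀ y : EuclideanSpace ℝ (Fin n),
      sminq^2*‖y‖^2 ≤ ∑ i ∈ τg, ⟪a i, y⟫_ℝ^2 := by
    intro y
    refine le_trans (hsminq σ (by rw [hσcard, hkqβ]) y)
      (Finset.sum_le_sum_of_subset_of_nonneg hσsub fun i _ _ => sq_nonneg _)
  have hτguniv : ∀ y : EuclideanSpace ℝ (Fin n),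
      ∑ i ∈ τg, ⟪a i, y⟫_ℝ^2 ≤ smax^2*‖y‖^2 := fun y =>
    le_trans (Finset.sum_le_sum_of_subset_of_nonneg (Finset.subset_univ _)
      fun i _ _ => sq_nonneg _) (hsmax y)
  have hDsmax : sminq^2 ≤ smax^2 := by
    set y0 : EuclideanSpace ℝ (Fin n) := EuclideanSpace.single ⟨0, hn⟩ (1:ℝ) with hy0
    have hy0n : ‖y0‖ = 1 := by rw [hy0, EuclideanSpace.norm_single]; norm_num
    have h1 := hD y0
    have h2 := hτguniv y0
    rw [hy0n] at h1 h2
    simp only [one_pow, mul_one] at h1 h2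
    linarith
  have htD : t * sminq^2 ≤ 1 :=
    le_trans (mul_le_mul_of_nonneg_left hDsmax htpos.le) htsmax
  set c := 1 - t * sminq^2 with hcdef
  have hc0 : 0 ≤ c := by rw [hcdef]; linarith
  ------------------------------------------------------------------
  -- Quantile analysis
  ------------------------------------------------------------------
  set f : Fin m → ℝ := fun j => |⟪a j, x⟫_ℝ - b j| with hf
  set Q := qQuantile q f with hQdef2
  set l := Multiset.sort (Multiset.map f Finset.univ.val) (· ≤ ·) with hl
  have hlen : l.length = m := by
    rw [hl, Multiset.length_sort, Multiset.card_map]; simp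
  have hkq1 : 1 ≤ kq := by
    rcases Nat.eq_zero_or_pos kq with h | h
    · exfalso
      rw [h] at hkq
      norm_num at hkq
      rcases hkq with h' | h'
      · linarith
      · omega
    · exact h
  have hkqm : kq ≤ m := by
    have : (kq:ℝ) ≤ m := by
      rw [hkq]
      have h9 : q*m ≤ 1*m := mul_le_mul_of_nonneg_right (by linarith) hmpos.le
      linarith
    exact_mod_cast this
  have hidx : kq - 1 < l.length := by rw [hlen]; omega
  have hQget : Q = l.get ⟨kq - 1, hidx⟩ := by
    rw [hQdef2]
    unfold qQuantile
    rw [show ⌈q * (m:ℝ)⌉₊ = kq from by rw [← hkq, Nat.ceil_natCast], ← hl]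
    exact List.getD_eq_get l 0 ⟨kq - 1, hidx⟩
  have hsorted : l.Pairwise (· ≤ ·) := by rw [hl]; exact Multiset.pairwise_sort _ _
  have hQ0 : 0 ≤ Q := by
    have h1 : l.get ⟨kq - 1, hidx⟩ ∈ l := List.get_mem l ⟨kq - 1, hidx⟩
    rw [← hQget, hl] at h1
    have h2 : Q ∈ Multiset.map f Finset.univ.val := (Multiset.mem_sort _).1 h1
    obtain ⟨j, _, hj⟩ := Multiset.mem_map.1 h2
    rw [← hj, hf]; exact abs_nonneg _
  have hdropge : ∀ y ∈ l.drop (kq-1), Q ≤ y := by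
    intro y hy
    obtain ⟨j, hget⟩ := List.mem_iff_get.1 hy
    have hjl : (kq-1) + (j:ℕ) < l.length := by
      have h9 : (j:ℕ) < l.length - (kq-1) := by simpa [List.length_drop] using j.isLt
      omega
    have h3 : (l.drop (kq-1)).get j = l.get ⟨(kq-1) + (j:ℕ), hjl⟩ := by
      simp [List.getElem_drop]
    rw [← hget, h3, hQget]
    exact hsorted.rel_get_of_le (by simp [Fin.le_def])
  have hsubperm : (↑(l.drop (kq-1)) : Multiset ℝ) ≤ Multiset.map f Finset.univ.val := by
    have h4 : (l : Multiset ℝ) = Multiset.map f Finset.univ.val := by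
      rw [hl]; exact Multiset.sort_eq _ _
    calc (↑(l.drop (kq-1)) : Multiset ℝ) ≤ ↑l := Multiset.coe_le.2 (List.drop_sublist _ _).subperm
      _ = _ := h4
  set Big := Finset.univ.filter (fun j => Q ≤ f j) with hBig
  have hcount : (m - (kq - 1) : ℕ) ≤ Big.card := by
    have h1 : Multiset.filter (fun y => Q ≤ y) (↑(l.drop (kq-1)) : Multiset ℝ)
        = ↑(l.drop (kq-1)) := Multiset.filter_eq_self.2 hdropge
    have h2 := Multiset.card_le_card
      (Multiset.filter_le_filter (fun y => Q ≤ y) hsubperm)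
    rw [h1, Multiset.coe_card, List.length_drop, hlen] at h2
    have h4 : Multiset.card (Multiset.filter (fun y => Q ≤ y)
        (Multiset.map f Finset.univ.val)) = Big.card := by
      rw [← Multiset.countP_eq_card_filter, Multiset.countP_map, hBig, Finset.card_def,
        Finset.filter_val, ← Multiset.countP_eq_card_filter]
    omega
  set cor := (Finset.univ : Finset (Fin m)).filter (fun i => bc i ≠ 0) with hcor
  set BG := Big \ cor with hBG
  have hBGcard : (1-q-β)*m ≤ (BG.card : ℝ) := by
    have h5 : Big.card ≤ BG.card + cor.card := Finset.card_le_card_sdiff_add_card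
    have h6 : ((m - (kq-1) : ℕ) : ℝ) = (m:ℝ) - (q*m - 1) := by
      rw [Nat.cast_sub (by omega), Nat.cast_sub (by omega), Nat.cast_one, hkq]
    have h7 : ((m - (kq-1) : ℕ) : ℝ) ≤ (BG.card:ℝ) + (cor.card:ℝ) := by
      exact_mod_cast le_trans (Nat.cast_le.2 hcount) (Nat.cast_le.2 h5)
    rw [h6] at h7
    linarith [hcorr]
  have key1 : Q^2 * ((1-q-β)*m) ≤ smax^2 * ‖e‖^2 := by
    have hsum1 : (BG.card : ℝ) * Q^2 ≤ ∑ j ∈ BG, ⟪a j, e⟫_ℝ^2 := by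
      have hb1 : ∀ j ∈ BG, Q^2 ≤ ⟪a j, e⟫_ℝ^2 := by
        intro j hj
        obtain ⟨hjBig, hjcor⟩ := Finset.mem_sdiff.1 hj
        have hbc : bc j = 0 := by
          by_contra hcon
          exact hjcor (Finset.mem_filter.2 ⟨Finset.mem_univ _, hcon⟩)
        have hQf : Q ≤ f j := (Finset.mem_filter.1 hjBig).2
        have hfj : f j = |⟪a j, e⟫_ℝ| := by rw [hf]; simp only []; rw [hre j, hbc, sub_zero]
        calc Q^2 ≤ (f j)^2 := pow_le_pow_left₀ hQ0 hQf 2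
          _ = ⟪a j, e⟫_ℝ^2 := by rw [hfj, sq_abs]
      have := Finset.card_nsmul_le_sum BG (fun j => ⟪a j, e⟫_ℝ^2) (Q^2) hb1
      simpa [nsmul_eq_mul] using this
    have hsum2 : ∑ j ∈ BG, ⟪a j, e⟫_ℝ^2 ≤ smax^2*‖e‖^2 :=
      le_trans (Finset.sum_le_sum_of_subset_of_nonneg (Finset.subset_univ _)
        fun i _ _ => sq_nonneg _) (hsmax e)
    calc Q^2 * ((1-q-β)*m) ≤ Q^2 * (BG.card:ℝ) :=
          mul_le_mul_of_nonneg_left hBGcard (sq_nonneg Q)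
      _ = (BG.card:ℝ) * Q^2 := by ring
      _ ≤ _ := le_trans hsum1 hsum2
  have key2 : (∑ i ∈ τc, (⟪a i, x⟫_ℝ - b i)^2) * (1-q-β) ≤ β * (smax^2*‖e‖^2) := by
    have hA : ∑ i ∈ τc, (⟪a i, x⟫_ℝ - b i)^2 ≤ (τc.card:ℝ) * Q^2 := by
      have := Finset.sum_le_card_nsmul τc (fun i => (⟪a i, x⟫_ℝ - b i)^2) (Q^2) ?_
      · simpa [nsmul_eq_mul] using this
      · intro i hi
        have h := hτres i (Finset.filter_subset _ _ hi)
        calc (⟪a i, x⟫_ℝ - b i)^2 = |⟪a i, x⟫_ℝ - b i|^2 := (sq_abs _).symm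
          _ ≤ Q^2 := pow_le_pow_left₀ (abs_nonneg _) h 2
    have hB' : (τc.card:ℝ) * Q^2 ≤ β*m * Q^2 :=
      mul_le_mul_of_nonneg_right hτccor (sq_nonneg Q)
    have h6 : (∑ i ∈ τc, (⟪a i, x⟫_ℝ - b i)^2) * (1-q-β)
        ≤ (β*m*Q^2) * (1-q-β) :=
      mul_le_mul_of_nonneg_right (le_trans hA hB') h1qβ.le
    have h8 : β * (Q^2*((1-q-β)*m)) ≤ β * (smax^2*‖e‖^2) :=
      mul_le_mul_of_nonneg_left key1 hβ0
    calc (∑ i ∈ τc, (⟪a i, x⟫_ℝ - b i)^2) * (1-q-β)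
        ≤ (β*m*Q^2) * (1-q-β) := h6
      _ = β * (Q^2*((1-q-β)*m)) := by ring
      _ ≤ β * (smax^2*‖e‖^2) := h8
  set w := ∑ i ∈ τc, (⟪a i, x⟫_ℝ - b i) • a i with hwdef
  have hw : ‖w‖ ≤ s1*smax^2/s2*‖e‖ := by
    have h1 := aux_norm_comb a smax hsmax τc (fun i => ⟪a i, x⟫_ℝ - b i)
    have hXY : (s1*smax^2/s2*‖e‖)^2 = β*smax^4*‖e‖^2/(1-q-β) := by
      rw [mul_pow, div_pow, mul_pow, hs1sq, hs2sq]; ring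
    have h2 : smax^2 * ∑ i ∈ τc, (⟪a i, x⟫_ℝ - b i)^2 ≤ β*smax^4*‖e‖^2/(1-q-β) := by
      rw [le_div_iff₀ h1qβ]
      calc smax^2 * (∑ i ∈ τc, (⟪a i, x⟫_ℝ - b i)^2) * (1-q-β)
          = smax^2 * ((∑ i ∈ τc, (⟪a i, x⟫_ℝ - b i)^2) * (1-q-β)) := by ring
        _ ≤ smax^2 * (β * (smax^2*‖e‖^2)) :=
            mul_le_mul_of_nonneg_left key2 (sq_nonneg _)
        _ = β*smax^4*‖e‖^2 := by ring
    have h3 : ‖w‖^2 ≤ (s1*smax^2/s2*‖e‖)^2 := by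
      rw [hXY]; exact le_trans h1 h2
    have h0 : 0 ≤ s1*smax^2/s2*‖e‖ := by positivity
    exact (pow_le_pow_iff_left₀ (norm_nonneg _) h0 two_ne_zero).1 h3
  -- spectral bound
  have hcabs : ∀ y : EuclideanSpace ℝ (Fin n),
      |‖y‖^2 - t*∑ i ∈ τg, ⟪a i, y⟫_ℝ^2| ≤ c*‖y‖^2 := by
    intro y
    have h1 := mul_le_mul_of_nonneg_left (hD y) htpos.le
    have h2 := mul_le_mul_of_nonneg_left (hτguniv y) htpos.le
    refine abs_le.2 ⟨?_, ?_⟩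
    · have h3 : t * (smax^2*‖y‖^2) ≤ ‖y‖^2 := by
        calc t * (smax^2*‖y‖^2) = (t*smax^2)*‖y‖^2 := by ring
          _ ≤ 1*‖y‖^2 := mul_le_mul_of_nonneg_right htsmax (sq_nonneg _)
          _ = ‖y‖^2 := one_mul _
      have h4 : 0 ≤ c*‖y‖^2 := mul_nonneg hc0 (sq_nonneg _)
      linarith
    · have h5 : c*‖y‖^2 = ‖y‖^2 - t*(sminq^2*‖y‖^2) := by rw [hcdef]; ring
      rw [h5]
      linarith
  have hu := aux_spectral a t c τg hcabs e
  -- decomposition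
  have hsplit : ∑ i ∈ τ, (⟪a i, x⟫_ℝ - b i) • a i
      = (∑ i ∈ τg, ⟪a i, e⟫_ℝ • a i) + w := by
    have h1 := Finset.sum_filter_add_sum_filter_not τ (fun i => bc i ≠ 0)
      (fun i => (⟪a i, x⟫_ℝ - b i) • a i)
    rw [← hτc, ← hτg] at h1
    have h2 : ∑ i ∈ τg, (⟪a i, x⟫_ℝ - b i) • a i = ∑ i ∈ τg, ⟪a i, e⟫_ℝ • a i :=
      Finset.sum_congr rfl fun i hi => by rw [hre i, hτgbc i hi, sub_zero]
    rw [← h1, h2, hwdef, add_comm]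
  have hgoalvec : (x - (α / (τ.card : ℝ)) • ∑ i ∈ τ, (⟪a i, x⟫_ℝ - b i) • a i) - xstar
      = (e - t • ∑ i ∈ τg, ⟪a i, e⟫_ℝ • a i) - t • w := by
    have hta : (α / (τ.card : ℝ)) = t := by rw [htdef, hτcard]
    rw [hsplit, hta, smul_add, he]
    abel
  rw [hgoalvec]
  have hnorm : ‖(e - t • ∑ i ∈ τg, ⟪a i, e⟫_ℝ • a i) - t • w‖
      ≤ (c + t*(s1*smax^2/s2))*‖e‖ := by
    refine le_trans (norm_sub_le _ _) ?_
    have h1 : ‖t • w‖ ≤ t*(s1*smax^2/s2*‖e‖) := by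
      rw [norm_smul, Real.norm_eq_abs, abs_of_pos htpos]
      exact mul_le_mul_of_nonneg_left hw htpos.le
    calc ‖e - t • ∑ i ∈ τg, ⟪a i, e⟫_ℝ • a i‖ + ‖t • w‖
        ≤ c*‖e‖ + t*(s1*smax^2/s2*‖e‖) := add_le_add hu h1
      _ = (c + t*(s1*smax^2/s2))*‖e‖ := by ring
  have hcs : 0 ≤ c + t*(s1*smax^2/s2) := add_nonneg hc0 (by positivity)
  have hfin : ‖(e - t • ∑ i ∈ τg, ⟪a i, e⟫_ℝ • a i) - t • w‖^2
      ≤ ((c + t*(s1*smax^2/s2))*‖e‖)^2 := by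
    have := pow_le_pow_left₀ (norm_nonneg _) hnorm 2
    exact this
  refine le_trans hfin ?_
  have hL : ((c + t*(s1*smax^2/s2))*‖e‖)^2 = (c + t*(s1*smax^2/s2))^2*‖e‖^2 := by ring
  rw [hL]
  refine mul_le_mul_of_nonneg_right ?_ (sq_nonneg _)
  -- final coefficient inequality
  rw [← hs2sq, ← hs1sq]
  have hkey : 1 - (2 * sminq ^ 2 / (q * m) - 2 * s1 * smax ^ 2 / (q * m * s2)) * α +
        (smax ^ 2 * sminq ^ 2 / (q ^ 2 * m ^ 2) -
          2 * s1 * smax ^ 2 * sminq ^ 2 / (q ^ 2 * m ^ 2 * s2) +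
          s1^2 * smax ^ 4 / (q ^ 2 * m ^ 2 * s2^2)) * α ^ 2
      = (c + t*(s1*smax^2/s2))^2
        + (α^2/(q^2*m^2))*(smax^2*sminq^2 - sminq^2*sminq^2) := by
    rw [hcdef, htdef]
    field_simp
    ring
  rw [hkey]
  have hpos2 : 0 ≤ (α^2/(q^2*m^2))*(smax^2*sminq^2 - sminq^2*sminq^2) := by
    have h1 : 0 ≤ smax^2*sminq^2 - sminq^2*sminq^2 := by
      have h1' : smax^2*sminq^2 - sminq^2*sminq^2 = sminq^2*(smax^2-sminq^2) := by ring
      rw [h1']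
      exact mul_nonneg (sq_nonneg _) (by linarith)
    have h2 : 0 ≤ α^2/(q^2*m^2) := by positivity
    exact mul_nonneg h2 h1
  exact le_add_of_nonneg_right hpos2
end

section
/- Let A ∈ ℝ^{m×n} have rows a_1,…,a_m with ‖a_j‖ = 1 for all j, let b ∈ ℝ^m, and let x* ∈ ℝⁿ. Suppose i ∈ {1,…,m} is a corrupted index, i.e. ⟨a_i, x*⟩ ≠ b_i. Consider a projective block Kaczmarz sequence (x_k)_{k≥0}: for each k there is a set τ_k ⊆ {1,…,m} with i ∈ τ_k such that the subsystem A_{τ_k} x = b_{τ_k} is consistent, and x_{k+1} = x_k + A_{τ_k}^† (b_{τ_k} − A_{τ_k} x_k), where A_{τ_k}^† is the Moore–Penrose pseudoinverse. Then ⟨a_i, x_k⟩ = b_i for all k ≥ 1, and consequently ‖x_k − x*‖ ≥ |⟨a_i, x*⟩ − b_i| > 0 for all k ≥ 1; in particular the iterates do not converge to x*. -/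
open scoped InnerProductSpace Classical
open Matrix

/-- The Moore–Penrose pseudoinverse of a real matrix `B`, characterized by the four Penrose
conditions (`B P B = B`, `P B P = P`, and `B P`, `P B` symmetric); such a `P` always exists
and is unique. -/
noncomputable def moorePenrose {k n : Type*} [Fintype k] [Fintype n]
    (B : Matrix k n ℝ) : Matrix n k ℝ :=
  if h : ∃ P : Matrix n k ℝ,
      B * P * B = B ∧ P * B * P = P ∧ (B * P)ᵀ = B * P ∧ (P * B)ᵀ = P * B
  then h.choose else 0


lemma exists_pinv_linmap {V W : Type*} [NormedAddCommGroup V] [InnerProductSpace ℝ V]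
    [NormedAddCommGroup W] [InnerProductSpace ℝ W] [FiniteDimensional ℝ V]
    [FiniteDimensional ℝ W] (f : V →ₗ[ℝ] W) :
    ∃ g : W →ₗ[ℝ] V, f ∘ₗ (g ∘ₗ f) = f ∧ g ∘ₗ (f ∘ₗ g) = g ∧
      LinearMap.adjoint (f ∘ₗ g) = f ∘ₗ g ∧ LinearMap.adjoint (g ∘ₗ f) = g ∘ₗ f := by
  classical
  set K : Submodule ℝ V := (LinearMap.ker f)ᗮ with hK
  set e : K →ₗ[ℝ] W := f ∘ₗ K.subtype with he
  have hinj : Function.Injective e := by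
    intro v w hvw
    have hker : ((v : V) - w) ∈ LinearMap.ker f := by
      simp only [LinearMap.mem_ker, map_sub]
      have : e v = e w := hvw
      simpa [he] using sub_eq_zero.mpr this
    have hKmem : ((v : V) - w) ∈ K := K.sub_mem v.2 w.2
    have hz : ((v : V) - w) = 0 := by
      have h1 : ⟪((v : V) - w), ((v : V) - w)⟫_ℝ = 0 :=
        (Submodule.mem_orthogonal (LinearMap.ker f) _).mp hKmem _ hker
      exact inner_self_eq_zero.mp h1
    exact Subtype.ext (sub_eq_zero.mp hz)
  set U : Submodule ℝ W := LinearMap.range e with hU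
  set E : K ≃ₗ[ℝ] U := LinearEquiv.ofInjective e hinj with hE
  set g : W →ₗ[ℝ] V :=
    K.subtype ∘ₗ E.symm.toLinearMap ∘ₗ ((U.orthogonalProjectionOnto : W →L[ℝ] U) : W →ₗ[ℝ] U)
    with hg
  have hEcoe : ∀ v : K, ((E v : W)) = e v := by
    intro v; rfl
  have hfg : ∀ w : W, f (g w) = (U.orthogonalProjectionOnto w : W) := by
    intro w
    have : f (g w) = e (E.symm (U.orthogonalProjectionOnto w)) := rfl
    rw [this, ← hEcoe, E.apply_symm_apply]
  have hKperp : Kᗮ = LinearMap.ker f := Submodule.orthogonal_orthogonal _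
  have hfproj : ∀ v : V, f ((K.orthogonalProjectionOnto v : V)) = f v := by
    intro v
    have hmem : v - (K.orthogonalProjectionOnto v : V) ∈ Kᗮ :=
      Submodule.sub_starProjection_mem_orthogonal v
    rw [hKperp, LinearMap.mem_ker, map_sub, sub_eq_zero] at hmem
    exact hmem.symm
  have hgf : ∀ v : V, g (f v) = (K.orthogonalProjectionOnto v : V) := by
    intro v
    have hfv : f v = e (K.orthogonalProjectionOnto v) := (hfproj v).symm
    have hmemU : f v ∈ U := by rw [hfv]; exact LinearMap.mem_range_self e _
    have hproj : U.orthogonalProjectionOnto (f v) = ⟨f v, hmemU⟩ := by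
      apply Subtype.ext
      show (U.orthogonalProjectionOnto (f v) : W) = f v
      exact Submodule.starProjection_eq_self_iff (K := U) |>.mpr hmemU
    have : g (f v) = (E.symm (U.orthogonalProjectionOnto (f v)) : V) := rfl
    rw [this, hproj]
    congr 1
    rw [LinearEquiv.symm_apply_eq]
    exact Subtype.ext (by rw [hEcoe]; exact hfv)
  have hgmem : ∀ w : W, g w ∈ K := fun w => (E.symm (U.orthogonalProjectionOnto w)).2
  refine ⟨g, ?_, ?_, ?_, ?_⟩
  · ext v
    simp only [LinearMap.comp_apply]
    rw [hgf, hfproj]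
  · ext w
    simp only [LinearMap.comp_apply]
    rw [hgf (g w)]
    exact Submodule.starProjection_eq_self_iff (K := K) |>.mpr (hgmem w)
  · symm
    rw [LinearMap.eq_adjoint_iff]
    intro u v
    simp only [LinearMap.comp_apply]
    rw [hfg, hfg]
    exact Submodule.inner_starProjection_left_eq_right U u v
  · symm
    rw [LinearMap.eq_adjoint_iff]
    intro u v
    simp only [LinearMap.comp_apply]
    rw [hgf, hgf]
    exact Submodule.inner_starProjection_left_eq_right K u v

lemma toEuclideanLin_mul' {k m n : Type*} [Fintype k] [Fintype m] [Fintype n]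
    [DecidableEq m] [DecidableEq n] (M : Matrix k m ℝ) (N : Matrix m n ℝ) :
    Matrix.toEuclideanLin (M * N) = Matrix.toEuclideanLin M ∘ₗ Matrix.toEuclideanLin N := by
  apply LinearMap.ext
  intro v
  simp [Matrix.toEuclideanLin_apply, Matrix.mulVec_mulVec]

lemma conjT_eq_transpose {k n : Type*} (M : Matrix k n ℝ) : Mᴴ = Mᵀ := by
  ext i j; simp [Matrix.conjTranspose_apply]

lemma exists_moorePenrose {k n : Type*} [Fintype k] [Fintype n] (B : Matrix k n ℝ) :
    ∃ P : Matrix n k ℝ,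
      B * P * B = B ∧ P * B * P = P ∧ (B * P)ᵀ = B * P ∧ (P * B)ᵀ = P * B := by
  classical
  obtain ⟨g, h1, h2, h3, h4⟩ := exists_pinv_linmap (Matrix.toEuclideanLin B)
  set f := Matrix.toEuclideanLin B with hf
  refine ⟨Matrix.toEuclideanLin.symm g, ?_, ?_, ?_, ?_⟩
  · apply Matrix.toEuclideanLin.injective
    rw [toEuclideanLin_mul', toEuclideanLin_mul', LinearEquiv.apply_symm_apply]
    rw [LinearMap.comp_assoc]
    exact h1
  · apply Matrix.toEuclideanLin.injective
    rw [toEuclideanLin_mul', toEuclideanLin_mul', LinearEquiv.apply_symm_apply,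
      ← hf, LinearMap.comp_assoc]
    exact h2
  · apply Matrix.toEuclideanLin.injective
    rw [← conjT_eq_transpose, Matrix.toEuclideanLin_conjTranspose_eq_adjoint,
      toEuclideanLin_mul', LinearEquiv.apply_symm_apply]
    exact h3
  · apply Matrix.toEuclideanLin.injective
    rw [← conjT_eq_transpose, Matrix.toEuclideanLin_conjTranspose_eq_adjoint,
      toEuclideanLin_mul', LinearEquiv.apply_symm_apply]
    exact h4

/-- failure of projective block Kaczmarz under corruption.
Let `A ∈ ℝ^{m×n}` have unit-norm rows `a j`, let `x⋆ ∈ ℝⁿ`, and let `i` be a corrupted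
index, i.e. `⟨a i, x⋆⟩ ≠ b i`.  Consider projective block Kaczmarz iterates: at each step
`k` a block `τ k ∋ i` is chosen whose subsystem `A_{τ k} z = b_{τ k}` is consistent, and
`x_{k+1} = x_k + A_{τ k}† (b_{τ k} - A_{τ k} x_k)`.  Then `⟨a i, x_k⟩ = b i` for all
`k ≥ 1`, hence `‖x_k - x⋆‖ ≥ |⟨a i, x⋆⟩ - b i| > 0` for all `k ≥ 1`, and in particular
the iterates do not converge to `x⋆`. -/
theorem projective_block_kaczmarz_not_convergent
    (m n : ℕ) (a : Fin m → EuclideanSpace ℝ (Fin n))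
    (hunit : ∀ j, ‖a j‖ = 1)
    (b : Fin m → ℝ) (xstar : EuclideanSpace ℝ (Fin n))
    (i : Fin m) (hcorrupt : ⟪a i, xstar⟫_ℝ ≠ b i)
    (x : ℕ → EuclideanSpace ℝ (Fin n)) (τ : ℕ → Finset (Fin m))
    (hiτ : ∀ k, i ∈ τ k)
    (hconsistent : ∀ k, ∃ z : EuclideanSpace ℝ (Fin n), ∀ i' ∈ τ k, ⟪a i', z⟫_ℝ = b i')
    (hupdate : ∀ k, ∀ j : Fin n, x (k + 1) j =
      x k j + Matrix.mulVec
        (moorePenrose (fun (i' : ↥(τ k)) (j' : Fin n) => a (i' : Fin m) j'))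
        (fun i' : ↥(τ k) => b (i' : Fin m) - ⟪a (i' : Fin m), x k⟫_ℝ) j) :
    (∀ k, 1 ≤ k → ⟪a i, x k⟫_ℝ = b i) ∧
    0 < |⟪a i, xstar⟫_ℝ - b i| ∧
    (∀ k, 1 ≤ k → |⟪a i, xstar⟫_ℝ - b i| ≤ ‖x k - xstar‖) ∧
    ¬ Filter.Tendsto x Filter.atTop (nhds xstar) := by
  classical
  have hinner : ∀ (w : Fin m) (v : EuclideanSpace ℝ (Fin n)),
      ⟪a w, v⟫_ℝ = ∑ j, a w j * v j := by
    intro w v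
    simp [PiLp.inner_apply, RCLike.inner_apply, mul_comm]
  have hstep : ∀ k, ∀ i' : Fin m, i' ∈ τ k → ⟪a i', x (k + 1)⟫_ℝ = b i' := by
    intro k i0 hi0
    set B : Matrix (↥(τ k)) (Fin n) ℝ := fun i' j' => a (i' : Fin m) j' with hB
    obtain ⟨z, hz⟩ := hconsistent k
    have hP := exists_moorePenrose B
    have hBPB : B * moorePenrose B * B = B := by
      rw [moorePenrose, dif_pos hP]
      exact hP.choose_spec.1
    set c : ↥(τ k) → ℝ := fun i' => b (i' : Fin m) - ⟪a (i' : Fin m), x k⟫_ℝ with hc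
    have hcBu : c = B *ᵥ (fun j => z j - x k j) := by
      funext i''
      simp only [hc, hB, Matrix.mulVec, dotProduct, mul_sub,
        Finset.sum_sub_distrib, ← hinner]
      rw [hz i'' i''.2]
    have hfix : B *ᵥ (moorePenrose B *ᵥ c) = c := by
      rw [hcBu, Matrix.mulVec_mulVec, Matrix.mulVec_mulVec, hBPB]
    have hx1 : ∀ j, x (k + 1) j = x k j + (moorePenrose B *ᵥ c) j := hupdate k
    have : ⟪a i0, x (k + 1)⟫_ℝ
        = ⟪a i0, x k⟫_ℝ + (B *ᵥ (moorePenrose B *ᵥ c)) ⟨i0, hi0⟩ := by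
      rw [hinner, hinner]
      simp only [hx1]
      simp [Matrix.mulVec, dotProduct, hB, mul_add, Finset.sum_add_distrib]
    rw [this, hfix]
    simp [hc]
  have part1 : ∀ k, 1 ≤ k → ⟪a i, x k⟫_ℝ = b i := by
    intro k hk
    obtain ⟨k', rfl⟩ := Nat.exists_eq_add_of_le hk
    have := hstep (k') i (hiτ k')
    simpa [Nat.add_comm] using this
  have hpos : 0 < |⟪a i, xstar⟫_ℝ - b i| := abs_pos.mpr (sub_ne_zero.mpr hcorrupt)
  have part3 : ∀ k, 1 ≤ k → |⟪a i, xstar⟫_ℝ - b i| ≤ ‖x k - xstar‖ := by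
    intro k hk
    have h1 : ⟪a i, xstar⟫_ℝ - b i = ⟪a i, xstar - x k⟫_ℝ := by
      rw [inner_sub_right, part1 k hk]
    rw [h1]
    calc |⟪a i, xstar - x k⟫_ℝ| ≤ ‖a i‖ * ‖xstar - x k‖ := abs_real_inner_le_norm _ _
      _ = ‖x k - xstar‖ := by rw [hunit i, one_mul, norm_sub_rev]
  refine ⟨part1, hpos, part3, ?_⟩
  intro htend
  rw [Metric.tendsto_atTop] at htend
  obtain ⟨N, hN⟩ := htend (|⟪a i, xstar⟫_ℝ - b i|) hpos
  have h2 := hN (max N 1) (le_max_left _ _)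
  rw [dist_eq_norm] at h2
  exact absurd (part3 (max N 1) (le_max_right _ _)) (not_le.mpr h2)
end

section
/- Let A ∈ ℝ^{m×n} have nonzero rows a_1,…,a_m and suppose the system A x = b is consistent with solution x*. Then for every x ∈ ℝⁿ, the expected squared error after one randomized Kaczmarz step with row i chosen with probability ‖a_i‖²/‖A‖_F² satisfies ∑_{i=1}^m (‖a_i‖²/‖A‖_F²) · ‖x − ((⟨a_i, x⟩ − b_i)/‖a_i‖²)·a_i − x*‖² ≤ (1 − σ_min²/‖A‖_F²)·‖x − x*‖², where σ_min is the smallest singular value of A and ‖A‖_F its Frobenius norm. Consequently, the randomized Kaczmarz iterates satisfy 𝔼(‖x_k − x*‖²) ≤ (1 − σ_min²/‖A‖_F²)^k · ‖x_0 − x*‖². -/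
open scoped InnerProductSpace

/-- One step of the (randomized) Kaczmarz method with selected row `i`: the orthogonal
projection of `x` onto the hyperplane `{z : ⟨a i, z⟩ = b i}`. -/
noncomputable def kaczmarzUpdate {m n : ℕ} (a : Fin m → EuclideanSpace ℝ (Fin n))
    (b : Fin m → ℝ) (i : Fin m) (x : EuclideanSpace ℝ (Fin n)) :
    EuclideanSpace ℝ (Fin n) :=
  x - ((⟪a i, x⟫_ℝ - b i) / ‖a i‖ ^ 2) • a i

/-- Apply the updates indexed by the list `l` (in order) starting from `x`. -/
def iterPath {ι E : Type*} (U : ι → E → E) : List ι → E → E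
  | [], x => x
  | i :: l, x => iterPath U l (U i x)

/-- Strohmer–Vershynin.  Let `A ∈ ℝ^{m×n}` have nonzero rows `a i` and
let `A x = b` be consistent with solution `x⋆`.  Then one randomized Kaczmarz step, with
row `i` chosen with probability `‖a i‖²/‖A‖_F²`, contracts the expected squared error by
the factor `1 - σ_min²/‖A‖_F²`; consequently (summing over all sample paths) the
randomized Kaczmarz iterates satisfy
`𝔼 ‖x_k - x⋆‖² ≤ (1 - σ_min²/‖A‖_F²)^k · ‖x_0 - x⋆‖²`. -/
theorem randomized_kaczmarz_convergence
    (m n : ℕ) (a : Fin m → EuclideanSpace ℝ (Fin n))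
    (ha : ∀ i, a i ≠ 0)
    (b : Fin m → ℝ) (xstar : EuclideanSpace ℝ (Fin n))
    (hsol : ∀ i, ⟪a i, xstar⟫_ℝ = b i)
    (smin : ℝ) (hsmin0 : 0 ≤ smin)
    (hsmin : ∀ x : EuclideanSpace ℝ (Fin n),
      smin ^ 2 * ‖x‖ ^ 2 ≤ ∑ i, ⟪a i, x⟫_ℝ ^ 2) :
    (∀ x : EuclideanSpace ℝ (Fin n),
      ∑ i, ‖a i‖ ^ 2 / (∑ j, ‖a j‖ ^ 2) * ‖kaczmarzUpdate a b i x - xstar‖ ^ 2 ≤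
        (1 - smin ^ 2 / ∑ j, ‖a j‖ ^ 2) * ‖x - xstar‖ ^ 2) ∧
    ∀ (x₀ : EuclideanSpace ℝ (Fin n)) (k : ℕ),
      ∑ p : Fin k → Fin m,
          (∏ t, ‖a (p t)‖ ^ 2 / (∑ j, ‖a j‖ ^ 2)) *
            ‖iterPath (kaczmarzUpdate a b) (List.ofFn p) x₀ - xstar‖ ^ 2 ≤
        (1 - smin ^ 2 / ∑ j, ‖a j‖ ^ 2) ^ k * ‖x₀ - xstar‖ ^ 2 := by
  set S := ∑ j, ‖a j‖ ^ 2 with hSdef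
  have hSnn : 0 ≤ S := Finset.sum_nonneg fun j _ => by positivity
  -- key one-step identity
  have key : ∀ (i : Fin m) (x : EuclideanSpace ℝ (Fin n)),
      ‖kaczmarzUpdate a b i x - xstar‖ ^ 2
        = ‖x - xstar‖ ^ 2 - ⟪a i, x - xstar⟫_ℝ ^ 2 / ‖a i‖ ^ 2 := by
    intro i x
    have hA : (‖a i‖ : ℝ) ^ 2 ≠ 0 := pow_ne_zero _ (norm_ne_zero_iff.mpr (ha i))
    have h1 : kaczmarzUpdate a b i x - xstar
        = (x - xstar) - (⟪a i, x - xstar⟫_ℝ / ‖a i‖ ^ 2) • a i := by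
      unfold kaczmarzUpdate
      rw [inner_sub_right, hsol i]
      abel
    rw [h1, norm_sub_sq_real]
    have h2 : ⟪x - xstar, (⟪a i, x - xstar⟫_ℝ / ‖a i‖ ^ 2) • a i⟫_ℝ
        = (⟪a i, x - xstar⟫_ℝ / ‖a i‖ ^ 2) * ⟪a i, x - xstar⟫_ℝ := by
      rw [real_inner_smul_right, real_inner_comm]
    have h3 : ‖(⟪a i, x - xstar⟫_ℝ / ‖a i‖ ^ 2) • a i‖ ^ 2
        = (⟪a i, x - xstar⟫_ℝ / ‖a i‖ ^ 2) ^ 2 * ‖a i‖ ^ 2 := by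
      rw [norm_smul, mul_pow, Real.norm_eq_abs, sq_abs]
    rw [h2, h3]
    field_simp
    ring
  -- part 1
  have part1 : ∀ x : EuclideanSpace ℝ (Fin n),
      ∑ i, ‖a i‖ ^ 2 / S * ‖kaczmarzUpdate a b i x - xstar‖ ^ 2 ≤
        (1 - smin ^ 2 / S) * ‖x - xstar‖ ^ 2 := by
    intro x
    rcases eq_or_lt_of_le hSnn with hS0 | hSpos
    · have hempty : IsEmpty (Fin m) := by
        constructor
        intro i
        have := (Finset.sum_eq_zero_iff_of_nonneg
          (fun j (_ : j ∈ Finset.univ) => by positivity)).mp hS0.symm i (Finset.mem_univ i)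
        exact ha i (norm_eq_zero.mp (by nlinarith [norm_nonneg (a i)]))
      rw [Finset.univ_eq_empty, Finset.sum_empty, ← hS0, div_zero, sub_zero, one_mul]
      positivity
    · have hSne : S ≠ 0 := ne_of_gt hSpos
      have hsum : ∑ i, ‖a i‖ ^ 2 / S * ‖kaczmarzUpdate a b i x - xstar‖ ^ 2
          = ‖x - xstar‖ ^ 2 - (∑ i, ⟪a i, x - xstar⟫_ℝ ^ 2) / S := by
        have : ∀ i : Fin m, ‖a i‖ ^ 2 / S * ‖kaczmarzUpdate a b i x - xstar‖ ^ 2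
            = ‖a i‖ ^ 2 * ‖x - xstar‖ ^ 2 / S - ⟪a i, x - xstar⟫_ℝ ^ 2 / S := by
          intro i
          have hA : (‖a i‖ : ℝ) ^ 2 ≠ 0 := pow_ne_zero _ (norm_ne_zero_iff.mpr (ha i))
          rw [key i x]
          field_simp
          rw [mul_sub, mul_div_assoc', mul_comm (‖a i‖ ^ 2) (⟪a i, x - xstar⟫_ℝ ^ 2), mul_div_assoc, div_self hA, mul_one]
        rw [Finset.sum_congr rfl fun i _ => this i, Finset.sum_sub_distrib,
          ← Finset.sum_div, ← Finset.sum_div, ← Finset.sum_mul, ← hSdef,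
          mul_comm, mul_div_assoc, div_self hSne, mul_one]
      rw [hsum]
      have hb := hsmin (x - xstar)
      have : smin ^ 2 * ‖x - xstar‖ ^ 2 / S ≤ (∑ i, ⟪a i, x - xstar⟫_ℝ ^ 2) / S := by
        gcongr
      have h2 : (1 - smin ^ 2 / S) * ‖x - xstar‖ ^ 2
          = ‖x - xstar‖ ^ 2 - smin ^ 2 * ‖x - xstar‖ ^ 2 / S := by ring
      rw [h2]
      linarith [this]
  refine ⟨part1, ?_⟩
  -- contraction factor is within [0,1] (when n ≠ 0), or everything is trivial (n = 0)
  by_cases hn : n = 0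
  · subst hn
    have hsub : ∀ y z : EuclideanSpace ℝ (Fin 0), ‖y - z‖ = 0 := by
      intro y z
      have : y - z = 0 := PiLp.ext fun i => i.elim0
      rw [this, norm_zero]
    intro x₀ k
    simp [hsub]
  · have hc : smin ^ 2 / S ≤ 1 := by
      have i0 : Fin n := ⟨0, Nat.pos_of_ne_zero hn⟩
      set u : EuclideanSpace ℝ (Fin n) := EuclideanSpace.single i0 (1:ℝ) with hu
      have hnu : ‖u‖ = 1 := by rw [hu, EuclideanSpace.norm_single]; norm_num
      have h1 := hsmin u
      rw [hnu] at h1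
      have h2 : ∑ i, ⟪a i, u⟫_ℝ ^ 2 ≤ S := by
        apply Finset.sum_le_sum
        intro i _
        have := abs_real_inner_le_norm (a i) u
        rw [hnu, mul_one] at this
        nlinarith [abs_nonneg (⟪a i, u⟫_ℝ), sq_abs (⟪a i, u⟫_ℝ)]
      have hsS : smin ^ 2 ≤ S := by nlinarith
      rcases eq_or_lt_of_le hSnn with h0 | hpos
      · have : smin ^ 2 = 0 := le_antisymm (h0 ▸ hsS) (by positivity)
        rw [this, zero_div]; norm_num
      · exact (div_le_one hpos).mpr hsS
    have hcnn : 0 ≤ 1 - smin ^ 2 / S := by linarith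
    intro x₀ k
    induction k generalizing x₀ with
    | zero => simp [iterPath]
    | succ k ih =>
      have hre : ∑ p : Fin (k+1) → Fin m,
          (∏ t, ‖a (p t)‖ ^ 2 / S) * ‖iterPath (kaczmarzUpdate a b) (List.ofFn p) x₀ - xstar‖ ^ 2
          = ∑ i : Fin m, ∑ q : Fin k → Fin m,
            (‖a i‖ ^ 2 / S) * ((∏ t, ‖a (q t)‖ ^ 2 / S) *
              ‖iterPath (kaczmarzUpdate a b) (List.ofFn q) (kaczmarzUpdate a b i x₀) - xstar‖ ^ 2) := by
        rw [← Equiv.sum_comp (Fin.consEquiv (fun _ : Fin (k+1) => Fin m))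
          (fun p => (∏ t, ‖a (p t)‖ ^ 2 / S) * ‖iterPath (kaczmarzUpdate a b) (List.ofFn p) x₀ - xstar‖ ^ 2),
          Fintype.sum_prod_type]
        refine Finset.sum_congr rfl fun i _ => Finset.sum_congr rfl fun q _ => ?_
        have hcons : (Fin.consEquiv (fun _ : Fin (k+1) => Fin m)) (i, q) = Fin.cons i q := rfl
        rw [hcons]
        have hl : List.ofFn (Fin.cons i q : Fin (k+1) → Fin m) = i :: List.ofFn q := by
          rw [List.ofFn_succ]
          simp [Fin.cons_zero, Fin.cons_succ]
        have hprod : (∏ t : Fin (k+1), ‖a ((Fin.cons i q : Fin (k+1) → Fin m) t)‖ ^ 2 / S)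
            = (‖a i‖ ^ 2 / S) * ∏ t : Fin k, ‖a (q t)‖ ^ 2 / S := by
          rw [Fin.prod_univ_succ]
          simp [Fin.cons_zero, Fin.cons_succ]
        rw [hl, hprod]
        show _ = _
        rw [iterPath]
        ring
      rw [hre]
      calc ∑ i : Fin m, ∑ q : Fin k → Fin m,
            (‖a i‖ ^ 2 / S) * ((∏ t, ‖a (q t)‖ ^ 2 / S) *
              ‖iterPath (kaczmarzUpdate a b) (List.ofFn q) (kaczmarzUpdate a b i x₀) - xstar‖ ^ 2)
          ≤ ∑ i : Fin m, (‖a i‖ ^ 2 / S) *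
              ((1 - smin ^ 2 / S) ^ k * ‖kaczmarzUpdate a b i x₀ - xstar‖ ^ 2) := by
            apply Finset.sum_le_sum
            intro i _
            rw [← Finset.mul_sum]
            exact mul_le_mul_of_nonneg_left (ih (kaczmarzUpdate a b i x₀)) (by positivity)
        _ = (1 - smin ^ 2 / S) ^ k *
              ∑ i : Fin m, ‖a i‖ ^ 2 / S * ‖kaczmarzUpdate a b i x₀ - xstar‖ ^ 2 := by
            rw [Finset.mul_sum]; exact Finset.sum_congr rfl fun i _ => by ring
        _ ≤ (1 - smin ^ 2 / S) ^ k * ((1 - smin ^ 2 / S) * ‖x₀ - xstar‖ ^ 2) :=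
            mul_le_mul_of_nonneg_left (part1 x₀) (by positivity)
        _ = (1 - smin ^ 2 / S) ^ (k + 1) * ‖x₀ - xstar‖ ^ 2 := by ring
end

section
/- Let A ∈ ℝ^{m×n} have rows a_1,…,a_m each of unit Euclidean norm, and suppose the system A x = b is consistent with solution x*. Fix a block size t ∈ {1,…,m}, let σ²_{t,max} := max{σ_max²(A_τ) : τ ⊆ {1,…,m}, |τ| = t}, and set the step size α = t/σ²_{t,max}. Then for every x ∈ ℝⁿ, averaging uniformly over all subsets τ ⊆ {1,…,m} with |τ| = t, one has (1/C(m,t))·∑_{|τ|=t} ‖x − (α/t)·∑_{i ∈ τ}(⟨a_i, x⟩ − b_i)·a_i − x*‖² ≤ (1 − t·σ_min²/(m·σ²_{t,max}))·‖x − x*‖², where σ_min is the smallest singular value of A and C(m,t) is the binomial coefficient. -/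
open scoped InnerProductSpace
open Finset

lemma card_filter_mem_powersetCard {α : Type*} [DecidableEq α] (s : Finset α) (i : α)
    (hi : i ∈ s) (t : ℕ) :
    ((s.powersetCard (t + 1)).filter (fun τ => i ∈ τ)).card
      = (s.card - 1).choose t := by
  rw [← Finset.card_erase_of_mem hi, ← Finset.card_powersetCard t (s.erase i)]
  refine Finset.card_bij' (fun τ _ => τ.erase i) (fun σ _ => insert i σ) ?_ ?_ ?_ ?_
  · intro τ hτ
    simp only [mem_filter, mem_powersetCard] at hτ
    rw [mem_powersetCard]
    exact ⟨fun x hx => mem_erase.2 ⟨(mem_erase.1 hx).1,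
        hτ.1.1 (mem_erase.1 hx).2⟩,
      by rw [card_erase_of_mem hτ.2, hτ.1.2]; omega⟩
  · intro σ hσ
    rw [mem_powersetCard] at hσ
    have hiσ : i ∉ σ := fun h => (mem_erase.1 (hσ.1 h)).1 rfl
    simp only [mem_filter, mem_powersetCard]
    exact ⟨⟨insert_subset hi (hσ.1.trans (erase_subset _ _)),
      by rw [card_insert_of_notMem hiσ, hσ.2]⟩, mem_insert_self _ _⟩
  · intro τ hτ
    simp only [mem_filter] at hτ
    exact insert_erase hτ.2
  · intro σ hσ
    rw [mem_powersetCard] at hσ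
    have hiσ : i ∉ σ := fun h => (mem_erase.1 (hσ.1 h)).1 rfl
    exact erase_insert hiσ

lemma sum_powersetCard_sum_real {α : Type*} [DecidableEq α] [Fintype α] (t : ℕ)
    (f : α → ℝ) :
    ∑ τ ∈ Finset.powersetCard (t + 1) (Finset.univ : Finset α), ∑ i ∈ τ, f i
      = ((Fintype.card α - 1).choose t : ℝ) * ∑ i, f i := by
  have h : ∀ τ ∈ Finset.powersetCard (t + 1) (Finset.univ : Finset α),
      ∑ i ∈ τ, f i = ∑ i : α, if i ∈ τ then f i else 0 := by
    intro τ _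
    rw [Finset.sum_ite_mem]
    congr 1
    exact (Finset.univ_inter τ).symm
  rw [Finset.sum_congr rfl h, Finset.sum_comm]
  rw [Finset.mul_sum]
  apply Finset.sum_congr rfl
  intro i _
  rw [Finset.sum_ite, Finset.sum_const_zero, add_zero, Finset.sum_const,
    card_filter_mem_powersetCard Finset.univ i (Finset.mem_univ i) t]
  simp [Finset.card_univ, mul_comm]

/-- Necoara: one step of averaged random block Kaczmarz.
Let `A ∈ ℝ^{m×n}` have unit-norm rows `a i` and let `A x = b` be consistent with solution
`x⋆`.  Fix a block size `t ∈ {1,…,m}`, let `σ²_{t,max}` bound `σ_max²(A_τ)` over all row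
subsets `τ` of size `t`, and take the step size `α = t/σ²_{t,max}`.  Then, averaging
uniformly over all subsets `τ` of size `t`, the averaged block Kaczmarz update contracts
the squared error: the mean of `‖x - (α/t)·∑_{i∈τ}(⟨a i, x⟩ - b i)·a i - x⋆‖²` is at most
`(1 - t·σ_min²/(m·σ²_{t,max}))·‖x - x⋆‖²`. -/
theorem averaged_block_kaczmarz_one_step
    (m n : ℕ) (a : Fin m → EuclideanSpace ℝ (Fin n))
    (hunit : ∀ i, ‖a i‖ = 1)
    (b : Fin m → ℝ) (xstar : EuclideanSpace ℝ (Fin n))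
    (hsol : ∀ i, ⟪a i, xstar⟫_ℝ = b i)
    (smin : ℝ) (hsmin0 : 0 ≤ smin)
    (hsmin : ∀ x : EuclideanSpace ℝ (Fin n),
      smin ^ 2 * ‖x‖ ^ 2 ≤ ∑ i, ⟪a i, x⟫_ℝ ^ 2)
    (t : ℕ) (ht1 : 1 ≤ t) (htm : t ≤ m)
    (stmax2 : ℝ)
    (hstmax2 : ∀ τ : Finset (Fin m), τ.card = t →
      ∀ x : EuclideanSpace ℝ (Fin n), ∑ i ∈ τ, ⟪a i, x⟫_ℝ ^ 2 ≤ stmax2 * ‖x‖ ^ 2)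
    (α : ℝ) (hα : α = (t : ℝ) / stmax2)
    (x : EuclideanSpace ℝ (Fin n)) :
    ((m.choose t : ℝ))⁻¹ *
        ∑ τ ∈ Finset.powersetCard t (Finset.univ : Finset (Fin m)),
          ‖x - (α / (t : ℝ)) • ∑ i ∈ τ, (⟪a i, x⟫_ℝ - b i) • a i - xstar‖ ^ 2 ≤
      (1 - (t : ℝ) * smin ^ 2 / ((m : ℝ) * stmax2)) * ‖x - xstar‖ ^ 2 := by
  have hm1 : 1 ≤ m := ht1.trans htm
  -- residuals
  have hres : ∀ i, ⟪a i, x⟫_ℝ - b i = ⟪a i, x - xstar⟫_ℝ := by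
    intro i; rw [← hsol i, ← inner_sub_right]
  set r : Fin m → ℝ := fun i => ⟪a i, x - xstar⟫_ℝ with hrdef
  -- stmax2 ≥ 1
  have hst1 : (1:ℝ) ≤ stmax2 := by
    obtain ⟨τ, -, hτc⟩ := Finset.exists_subset_card_eq
      (show t ≤ (Finset.univ : Finset (Fin m)).card by simpa using htm)
    obtain ⟨i, hi⟩ := Finset.card_pos.mp (by omega : 0 < τ.card)
    have h := hstmax2 τ hτc (a i)
    rw [hunit i] at h
    have hii : ⟪a i, a i⟫_ℝ = 1 := by
      rw [real_inner_self_eq_norm_sq, hunit i]; norm_num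
    have h2 : ⟪a i, a i⟫_ℝ ^ 2 ≤ ∑ j ∈ τ, ⟪a j, a i⟫_ℝ ^ 2 :=
      Finset.single_le_sum (f := fun j => ⟪a j, a i⟫_ℝ ^ 2) (fun j _ => sq_nonneg _) hi
    rw [hii] at h2
    nlinarith
  have hst0 : (0:ℝ) < stmax2 := lt_of_lt_of_le one_pos hst1
  have ht0 : (t:ℝ) ≠ 0 := by positivity
  have hcα : α / (t:ℝ) = 1 / stmax2 := by rw [hα]; field_simp
  -- per-block contraction
  have key : ∀ τ ∈ Finset.powersetCard t (Finset.univ : Finset (Fin m)),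
      ‖x - (α / (t : ℝ)) • ∑ i ∈ τ, (⟪a i, x⟫_ℝ - b i) • a i - xstar‖ ^ 2
        ≤ ‖x - xstar‖ ^ 2 - (1/stmax2) * ∑ i ∈ τ, r i ^ 2 := by
    intro τ hτ
    rw [Finset.mem_powersetCard] at hτ
    have hsum : (∑ i ∈ τ, (⟪a i, x⟫_ℝ - b i) • a i) = ∑ i ∈ τ, r i • a i :=
      Finset.sum_congr rfl fun i _ => by rw [hres i]
    rw [hsum, hcα]
    set v : EuclideanSpace ℝ (Fin n) := ∑ i ∈ τ, r i • a i with hv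
    set S : ℝ := ∑ i ∈ τ, r i ^ 2 with hS
    have hS0 : 0 ≤ S := Finset.sum_nonneg fun i _ => sq_nonneg _
    have hve : ⟪x - xstar, v⟫_ℝ = S := by
      rw [hv, inner_sum, hS]
      refine Finset.sum_congr rfl fun i _ => ?_
      rw [real_inner_smul_right, real_inner_comm]
      ring
    have hAv : ∑ i ∈ τ, ⟪a i, v⟫_ℝ ^ 2 ≤ stmax2 * ‖v‖ ^ 2 := hstmax2 τ hτ.2 v
    have hvv : ‖v‖ ^ 2 = ∑ i ∈ τ, r i * ⟪a i, v⟫_ℝ := by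
      rw [← real_inner_self_eq_norm_sq]
      nth_rewrite 1 [hv]
      rw [sum_inner]
      exact Finset.sum_congr rfl fun i _ => real_inner_smul_left _ _ _
    have hCS := Finset.sum_mul_sq_le_sq_mul_sq τ r (fun i => ⟪a i, v⟫_ℝ)
    have hvS : ‖v‖ ^ 2 ≤ stmax2 * S := by
      rcases eq_or_ne ‖v‖ 0 with h0 | h0
      · rw [h0]; simpa using mul_nonneg hst0.le hS0
      · have hnv : 0 < ‖v‖ ^ 2 := by positivity
        nlinarith [hCS, hAv, hS0, hst0.le, hvv]
    have hre : x - (1/stmax2) • v - xstar = (x - xstar) - (1/stmax2) • v :=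
      sub_right_comm _ _ _
    rw [hre, norm_sub_sq_real, real_inner_smul_right, hve, norm_smul]
    have habs : ‖(1:ℝ)/stmax2‖ = 1/stmax2 := by
      rw [Real.norm_eq_abs, abs_of_pos (by positivity)]
    rw [habs, mul_pow]
    have hkey : (1/stmax2) ^ 2 * (stmax2 * S) = (1/stmax2) * S := by
      field_simp
    nlinarith [mul_le_mul_of_nonneg_left hvS
      (by positivity : (0:ℝ) ≤ (1/stmax2) ^ 2)]
  -- sum the per-block bounds
  obtain ⟨t', rfl⟩ : ∃ t', t = t' + 1 := ⟨t - 1, by omega⟩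
  have hswap : ∑ τ ∈ Finset.powersetCard (t' + 1) (Finset.univ : Finset (Fin m)),
      ∑ i ∈ τ, r i ^ 2 = ((m - 1).choose t' : ℝ) * ∑ i, r i ^ 2 := by
    rw [sum_powersetCard_sum_real t' (fun i => r i ^ 2)]
    simp [Fintype.card_fin]
  have hsumle : ∑ τ ∈ Finset.powersetCard (t' + 1) (Finset.univ : Finset (Fin m)),
      ‖x - (α / ((t' + 1 : ℕ) : ℝ)) • ∑ i ∈ τ, (⟪a i, x⟫_ℝ - b i) • a i - xstar‖ ^ 2
      ≤ (m.choose (t' + 1) : ℝ) * ‖x - xstar‖ ^ 2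
        - (1/stmax2) * (((m - 1).choose t' : ℝ) * ∑ i, r i ^ 2) := by
    calc _ ≤ ∑ τ ∈ Finset.powersetCard (t' + 1) (Finset.univ : Finset (Fin m)),
        (‖x - xstar‖ ^ 2 - (1/stmax2) * ∑ i ∈ τ, r i ^ 2) :=
          Finset.sum_le_sum key
      _ = _ := by
        rw [Finset.sum_sub_distrib, Finset.sum_const, ← Finset.mul_sum, hswap,
          Finset.card_powersetCard, Finset.card_univ, Fintype.card_fin]
        simp [nsmul_eq_mul]
  -- final arithmetic
  set C : ℝ := (m.choose (t' + 1) : ℝ) with hCdef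
  set N : ℝ := ((m - 1).choose t' : ℝ) with hNdef
  set R : ℝ := ∑ i, r i ^ 2 with hRdef
  have hC0 : (0:ℝ) < C := by
    rw [hCdef]; exact_mod_cast Nat.choose_pos htm
  have hM0 : (0:ℝ) < (m:ℝ) := by exact_mod_cast hm1
  have hT0 : (0:ℝ) < ((t' + 1 : ℕ) : ℝ) := by positivity
  have hMN : (m:ℝ) * N = C * ((t' + 1 : ℕ) : ℝ) := by
    rw [hNdef, hCdef]
    have h := Nat.add_one_mul_choose_eq (m - 1) t'
    have hm : m - 1 + 1 = m := by omega
    simp only [Nat.succ_eq_add_one, hm] at h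
    exact_mod_cast h
  have hR0 : 0 ≤ R := Finset.sum_nonneg fun i _ => sq_nonneg _
  have hRlb : smin ^ 2 * ‖x - xstar‖ ^ 2 ≤ R := hsmin (x - xstar)
  have h1 : C⁻¹ * ∑ τ ∈ Finset.powersetCard (t' + 1) (Finset.univ : Finset (Fin m)),
      ‖x - (α / ((t' + 1 : ℕ) : ℝ)) • ∑ i ∈ τ, (⟪a i, x⟫_ℝ - b i) • a i - xstar‖ ^ 2
      ≤ C⁻¹ * (C * ‖x - xstar‖ ^ 2 - (1/stmax2) * (N * R)) :=
    mul_le_mul_of_nonneg_left hsumle (by positivity)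
  have h2 : C⁻¹ * (C * ‖x - xstar‖ ^ 2 - (1/stmax2) * (N * R))
      = ‖x - xstar‖ ^ 2 - N * R / (C * stmax2) := by
    field_simp
  have h3 : N * R / (C * stmax2) = ((t' + 1 : ℕ) : ℝ) * R / ((m:ℝ) * stmax2) := by
    rw [div_eq_div_iff (by positivity) (by positivity)]
    linear_combination R * stmax2 * hMN
  have h4 : ((t' + 1 : ℕ) : ℝ) * smin ^ 2 / ((m:ℝ) * stmax2) * ‖x - xstar‖ ^ 2
      ≤ ((t' + 1 : ℕ) : ℝ) * R / ((m:ℝ) * stmax2) := by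
    rw [div_mul_eq_mul_div, mul_assoc]
    apply div_le_div_of_nonneg_right ?_ (by positivity) |>.trans_eq rfl
    exact mul_le_mul_of_nonneg_left hRlb (by positivity)
  have hgoal : (1 - ((t' + 1 : ℕ) : ℝ) * smin ^ 2 / ((m : ℝ) * stmax2)) * ‖x - xstar‖ ^ 2
      = ‖x - xstar‖ ^ 2 - ((t' + 1 : ℕ) : ℝ) * smin ^ 2 / ((m:ℝ) * stmax2) * ‖x - xstar‖ ^ 2 := by
    ring
  rw [hgoal]
  linarith [h1, h2, h3, h4]
end
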